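/- arXiv:1008.1667 — 5 statements merged into one kernel-verified Lean document; each statement's English description precedes it below -/
import Mathlib

section
/- For every natural number n there exists a binary string x_n such that x_n is not in L_{≤n}, i.e. no minimal description of x_n (with respect to the standard encoding S₀) uses a transducer with at most n states. -/
/-! ## Transducers

A deterministic sequential transducer over the binary alphabet `Bool`
(`false` = 0, `true` = 1), with state set `{0, …, n-1}` (representing the
states `1, …, n` of the paper) and start state `0` (the paper's state `1`). -/

structure Transducer where
  n : ℕ
  npos : 0 < n
  delta : Fin n → Bool → Fin n × List Bool

namespace Transducer

/-- The start state. -/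
def start (T : Transducer) : Fin T.n := ⟨0, T.npos⟩

/-- The (state) size of a transducer: its number of states. -/
def size (T : Transducer) : ℕ := T.n

/-- Running `T` from state `q` on an input string: resulting state and output. -/
def run (T : Transducer) (q : Fin T.n) : List Bool → Fin T.n × List Bool
  | [] => (q, [])
  | a :: x =>
    let s := T.delta q a
    let r := T.run s.1 x
    (r.1, s.2 ++ r.2)

/-- The function `{0,1}* → {0,1}*` computed by the transducer `T`. -/
def output (T : Transducer) (p : List Bool) : List Bool :=
  (T.run T.start p).2

end Transducer

/-- The one-state identity transducer. -/
def idTransducer : Transducer :=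
  ⟨1, Nat.one_pos, fun q b => (q, [b])⟩

/-! ## The standard encoding `S₀` -/

/-- `bin i`: the binary representation of `i ≥ 1`, most significant bit first. -/
def binRep (i : ℕ) : List Bool := (Nat.bits i).reverse

/-- `v† = v₁0v₂0⋯v_{m-1}0v_m1`. -/
def dagger : List Bool → List Bool
  | [] => []
  | [a] => [a, true]
  | a :: b :: v => a :: false :: dagger (b :: v)

/-- `v◇`: the bitwise complement of `(1v)†`. -/
def diamond (v : List Bool) : List Bool := (dagger (true :: v)).map (!·)

/-- The encoding `bin(i_t)‡ ⬝ v_t◇` of a single transition from state `j`,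
where `bin(i_t)‡ = ε` for a self-loop and `bin(i_t)† ` otherwise. -/
def encTransition {n : ℕ} (j : Fin n) (t : Fin n × List Bool) : List Bool :=
  (if t.1 = j then [] else dagger (binRep (t.1.val + 1))) ++ diamond t.2

/-- The standard encoding of a transducer: the concatenation, over the states
`j = 1, …, n` in order, of the encodings of the transitions on input `0` and
input `1` from `j`. -/
def stdEnc (T : Transducer) : List Bool :=
  (List.finRange T.n).flatMap fun j =>
    encTransition j (T.delta j false) ++ encTransition j (T.delta j true)

/-- `D_{S₀}`, the set of standard encodings of transducers. -/
def DS0 : Set (List Bool) := Set.range stdEnc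

/-- The set of sizes `|σ| + |p|` of descriptions `(T_σ, p)` of `x` with respect
to the standard encoding. -/
def stdSizes (x : List Bool) : Set ℕ :=
  {c | ∃ (T : Transducer) (p : List Bool),
    T.output p = x ∧ c = (stdEnc T).length + p.length}

/-- `C x`: the finite-state complexity of `x` w.r.t. the standard encoding. -/
noncomputable def Cstd (x : List Bool) : ℕ := sInf (stdSizes x)

/-- `L_{≤ m}` w.r.t. the standard encoding: strings having a minimal
description by a transducer with at most `m` states. -/
def stdLle (m : ℕ) : Set (List Bool) :=
  {x | ∃ (T : Transducer) (p : List Bool),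
    T.output p = x ∧ (stdEnc T).length + p.length = Cstd x ∧ T.size ≤ m}

/-! ## Computable encodings -/

/-- A computable encoding `S = (D_S, f_S)` of all transducers: a decidable
(computable) set `D_S ⊆ {0,1}*` together with a computable bijection
`f_S : D_S → 𝒯_DGSM`, presented via a decoding function
`decode : {0,1}* → Option Transducer` defined exactly on `D_S`; its
computability is expressed via the (injective) standard encoding `stdEnc`. -/
structure CompEncoding where
  D : Set (List Bool)
  dec : ComputablePred (· ∈ D)
  decode : List Bool → Option Transducer
  decode_dom : ∀ σ, (decode σ).isSome ↔ σ ∈ D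
  decode_inj : ∀ σ₁ ∈ D, ∀ σ₂ ∈ D, decode σ₁ = decode σ₂ → σ₁ = σ₂
  decode_surj : ∀ T : Transducer, ∃ σ, decode σ = some T
  decode_comp : Computable fun σ => (decode σ).map stdEnc

namespace CompEncoding

/-- The set of sizes `|σ| + |p|` of descriptions `(T^S_σ, p)` of `x`. -/
def sizes (S : CompEncoding) (x : List Bool) : Set ℕ :=
  {c | ∃ (σ : List Bool) (T : Transducer) (p : List Bool),
    S.decode σ = some T ∧ T.output p = x ∧ c = σ.length + p.length}

/-- `C_S x`: the finite-state complexity of `x` w.r.t. the encoding `S`. -/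
noncomputable def C (S : CompEncoding) (x : List Bool) : ℕ := sInf (S.sizes x)

/-- `L^S_{≤ m}`: strings having a minimal description by a transducer with at
most `m` states (this is empty for `m = 0` since every transducer has at
least one state). -/
def Lle (S : CompEncoding) (m : ℕ) : Set (List Bool) :=
  {x | ∃ (σ : List Bool) (T : Transducer) (p : List Bool),
    S.decode σ = some T ∧ T.output p = x ∧
    σ.length + p.length = S.C x ∧ T.size ≤ m}

/-- `L^S_{= m} = L^S_{≤ m} \ L^S_{≤ m-1}`. -/
def Leq (S : CompEncoding) (m : ℕ) : Set (List Bool) := S.Lle m \ S.Lle (m - 1)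

/-- `L^S_{∃min m}`: strings having a minimal description by a transducer with
exactly `m` states. -/
def LexistsMin (S : CompEncoding) (m : ℕ) : Set (List Bool) :=
  {x | ∃ (σ : List Bool) (T : Transducer) (p : List Bool),
    S.decode σ = some T ∧ T.output p = x ∧
    σ.length + p.length = S.C x ∧ T.size = m}

end CompEncoding

/-! ## The strings `u_i` and `x_n(m)` from the proof of Theorem 1 -/

/-- `u_i = 1 0^i 1^{2n+2-i}` (for `1 ≤ i ≤ 2n+1`, a string of length `2n+3`). -/
def u (n i : ℕ) : List Bool :=
  true :: (List.replicate i false ++ List.replicate (2 * n + 2 - i) true)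

/-- `x_n(m) = u_1^{m²} u_2^{m²} ⋯ u_{2n+1}^{m²}`. -/
def xnm (n m : ℕ) : List Bool :=
  (List.range (2 * n + 1)).flatMap fun i => (List.replicate (m ^ 2) (u n (i + 1))).flatten

/-! ## The transducer `T₁` and input `p₁` from the proof of Theorem 1 -/

/-- The `2n`-state transducer `T₁` with `Δ(j,0) = (j, u_j^m)` for `1 ≤ j ≤ 2n`,
`Δ(j,1) = (j+1, ε)` for `1 ≤ j ≤ 2n-1`, and `Δ(2n,1) = (2n, u_{2n+1}^m)`. -/
def T1 (n m : ℕ) (hn : 0 < n) : Transducer where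
  n := 2 * n
  npos := by omega
  delta := fun j b =>
    match b with
    | false => (j, (List.replicate m (u n (j.val + 1))).flatten)
    | true =>
      if h : j.val + 1 < 2 * n then (⟨j.val + 1, h⟩, [])
      else (j, (List.replicate m (u n (2 * n + 1))).flatten)

/-- `p₁ = (0^m 1)^{2n-1} 0^m 1^m`. -/
def p1 (n m : ℕ) : List Bool :=
  (List.replicate (2 * n - 1) (List.replicate m false ++ [true])).flatten
    ++ List.replicate m false ++ List.replicate m true

/-! ## The transducers `T_n` from Section 5 -/

/-- `p_i`: the `i`-th prime (`p₁ = 2`, `p₂ = 3`, …). -/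
noncomputable def nthPrime (i : ℕ) : ℕ := Nat.nth Nat.Prime (i - 1)

/-- The `n`-state transducer `T_n` with `Δ_n(1,0) = (1, 0^{p_n})`,
`Δ_n(i,0) = (i, ε)` for `2 ≤ i ≤ n`, `Δ_n(j,1) = (j+1, ε)` for
`1 ≤ j ≤ n-1`, and `Δ_n(n,1) = (n, ε)`. -/
noncomputable def Tsec5 (n : ℕ) (hn : 0 < n) : Transducer where
  n := n
  npos := hn
  delta := fun j b =>
    match b with
    | false =>
      if j.val = 0 then (j, List.replicate (nthPrime n) false) else (j, [])
    | true =>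
      if h : j.val + 1 < n then (⟨j.val + 1, h⟩, []) else (j, [])

/-- The defining properties of the encoding `S₁` of Theorem 4: each `T_n` is
encoded by `bin(n)`, and every transducer that is not one of the `T_n` is
encoded by `0` concatenated with its standard encoding. -/
def IsS1 (S : CompEncoding) : Prop :=
  (∀ (n : ℕ) (hn : 0 < n), S.decode (binRep n) = some (Tsec5 n hn)) ∧
  (∀ T : Transducer, (∀ (n : ℕ) (hn : 0 < n), T ≠ Tsec5 n hn) →
    S.decode (false :: stdEnc T) = some T)

/-- The defining properties of the encoding `S₁'` of Corollary 2: each `T_n` is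
encoded by `bin(n)† ⬝ 1^n`, and every transducer `T` that is not one of the
`T_n`, with standard encoding `σ`, is encoded by `0 ⬝ σ† ⬝ 1^{2^{|σ|}}`. -/
def IsS1' (S : CompEncoding) : Prop :=
  (∀ (n : ℕ) (hn : 0 < n),
    S.decode (dagger (binRep n) ++ List.replicate n true) = some (Tsec5 n hn)) ∧
  (∀ T : Transducer, (∀ (n : ℕ) (hn : 0 < n), T ≠ Tsec5 n hn) →
    S.decode (false :: (dagger (stdEnc T) ++
      List.replicate (2 ^ (stdEnc T).length) true)) = some T)

/-! The witness is `x = (0 1)^{k²} (0² 1)^{k²} ⋯ (0^{2n+1} 1)^{k²}` for large `k`. A transducer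
with `2n + 1` states, whose state `j` writes `(0^j 1)^k` on `0` and moves to state `j + 1` on `1`,
describes `x` with an encoding and an input of length `O(k)`, so `C(x) = O(k)`.

A transducer with at most `n` states has at most `2n` transitions, so some marker `1 0^i 1` with
`1 ≤ i ≤ 2n + 1` is not the only marker of any transition output. As the block lengths of `x` are
sorted, consecutive pieces of a factorisation of `x` share at most one marker, so the outputs used
in a description `(σ, p)` of `x` contain at most `2n` markers beyond their first ones. Hence the
`≈ k²` occurrences of `1 0^i 1` in `x` number at most `(2n + 3)(|σ| + |p|)`, which is
`O(k)` if the description is minimal: a contradiction for large `k`. -/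

namespace List

variable {α : Type*} [DecidableEq α]

def infixCount (w : List α) : List α → ℕ
  | [] => 0
  | a :: v => (if w <+: a :: v then 1 else 0) + infixCount w v

theorem infixCount_le_length (w v : List α) : infixCount w v ≤ v.length := by
  induction v with
  | nil => rfl
  | cons a v ih => simp only [infixCount, length_cons]; split <;> omega

theorem infixCount_append_ge (w u v : List α) :
    infixCount w u + infixCount w v ≤ infixCount w (u ++ v) := by
  induction u with
  | nil => simp [infixCount]
  | cons a u ih =>
    have : w <+: a :: u → w <+: a :: (u ++ v) := fun h => h.trans (prefix_append _ _)
    simp only [infixCount, cons_append]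
    split_ifs <;> simp_all <;> omega

theorem infixCount_append_le (w u v : List α) :
    infixCount w (u ++ v) ≤ infixCount w u + infixCount w v + min u.length w.length := by
  induction u with
  | nil => simp [infixCount]
  | cons a u ih =>
    simp only [infixCount, cons_append, length_cons]
    by_cases hlen : u.length + 1 ≤ w.length
    · split_ifs <;> omega
    · have : w <+: a :: (u ++ v) → w <+: a :: u := fun h =>
        prefix_iff_eq_take.2 (by
          have h' := prefix_iff_eq_take.1 h
          rwa [← cons_append, take_append_of_le_length (by simp; omega)] at h')
      split_ifs <;> simp_all <;> omega

theorem infixCount_flatten_le (w : List α) (E : List (List α)) :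
    infixCount w E.flatten ≤ (E.map (infixCount w)).sum + E.length * w.length := by
  induction E with
  | nil => simp [infixCount]
  | cons e E ih =>
    have := infixCount_append_le w e E.flatten
    simp only [flatten_cons, map_cons, sum_cons, length_cons, add_mul, one_mul]
    omega

theorem infixCount_le_of_infix (w : List α) {u v : List α} (h : u <:+: v) :
    infixCount w u ≤ infixCount w v := by
  obtain ⟨s, t, rfl⟩ := h
  have h₁ := infixCount_append_ge w s (u ++ t)
  have h₂ := infixCount_append_ge w u t
  rw [append_assoc]
  omega

theorem infix_of_infixCount_pos {w v : List α} (h : 0 < infixCount w v) : w <:+: v := by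
  induction v with
  | nil => simp [infixCount] at h
  | cons a v ih =>
    simp only [infixCount] at h
    split_ifs at h with hw
    · exact hw.isInfix
    · exact (ih (by omega)).trans (suffix_cons a v).isInfix

end List

theorem List.cons_infix_of_cons_infix_replicate_append {α : Type*} {a b : α} (hab : a ≠ b)
    {z Y : List α} (c : ℕ) (h : a :: z <:+: List.replicate c b ++ Y) : a :: z <:+: Y := by
  induction c with
  | zero => simpa using h
  | succ c ih =>
    rcases List.infix_cons_iff.1 (by simpa [List.replicate_succ] using h) with h | h
    · exact absurd (List.cons_prefix_cons.1 h).1 hab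
    · exact ih h

theorem Finset.exists_mem_Icc_forall_two_le_card {ι : Type*} [Fintype ι] (F : ι → Finset ℕ)
    {K : ℕ} (hK : Fintype.card ι < K) :
    ∃ i ∈ Finset.Icc 1 K, ∀ t, i ∈ F t → 2 ≤ (F t).card := by
  classical
  let small := (Finset.univ.filter fun t => (F t).card ≤ 1).biUnion F
  have hsmall : small.card < (Finset.Icc 1 K).card := by
    calc small.card ≤ ∑ t ∈ Finset.univ.filter (fun t => (F t).card ≤ 1), (F t).card :=
          Finset.card_biUnion_le
      _ ≤ ∑ _t ∈ Finset.univ.filter (fun t => (F t).card ≤ 1), 1 :=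
          Finset.sum_le_sum fun t ht => (Finset.mem_filter.1 ht).2
      _ ≤ Fintype.card ι := by simpa using Finset.card_filter_le Finset.univ _
      _ < (Finset.Icc 1 K).card := by simpa using hK
  obtain ⟨i, hi, hnot⟩ := Finset.exists_mem_notMem_of_card_lt_card hsmall
  refine ⟨i, hi, fun t hit => ?_⟩
  by_contra hlt
  exact hnot (Finset.mem_biUnion.2 ⟨t, Finset.mem_filter.2 ⟨Finset.mem_univ t, by omega⟩, hit⟩)

namespace Transducer

theorem run_replicate_append_snd (T : Transducer) {q : Fin T.n} {a : Bool} {w : List Bool}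
    (hq : T.delta q a = (q, w)) (c : ℕ) (x : List Bool) :
    (T.run q (List.replicate c a ++ x)).2 = (List.replicate c w).flatten ++ (T.run q x).2 := by
  induction c with
  | zero => simp
  | succ c ih => simp [List.replicate_succ, run, hq, ih]

theorem exists_run_snd_eq_flatten (T : Transducer) (q : Fin T.n) (p : List Bool) :
    ∃ E : List (List Bool), (T.run q p).2 = E.flatten ∧ E.length = p.length ∧
      ∀ e ∈ E, ∃ q b, e = (T.delta q b).2 := by
  induction p generalizing q with
  | nil => exact ⟨[], rfl, rfl, by simp⟩
  | cons a p ih =>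
    obtain ⟨E, hE, hlen, hmem⟩ := ih (T.delta q a).1
    refine ⟨(T.delta q a).2 :: E, by simp [run, hE], by simp [hlen], ?_⟩
    rintro e (_ | ⟨_, he⟩)
    · exact ⟨q, a, rfl⟩
    · exact hmem e he

end Transducer

theorem length_dagger : ∀ v : List Bool, (dagger v).length = 2 * v.length
  | [] => rfl
  | [_] => rfl
  | a :: b :: v => by
    simp only [dagger, List.length_cons, length_dagger (b :: v)]
    ring

theorem length_diamond (v : List Bool) : (diamond v).length = 2 * v.length + 2 := by
  simp [diamond, length_dagger]
  ring

theorem length_binRep_le (i : ℕ) : (binRep i).length ≤ i := by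
  rw [binRep, List.length_reverse, Nat.size_eq_bits_len]
  exact Nat.size_le.2 i.lt_two_pow_self

theorem length_encTransition_le {m : ℕ} (j : Fin m) (t : Fin m × List Bool) :
    (encTransition j t).length ≤ 2 * (m + t.2.length + 1) := by
  have : (if t.1 = j then [] else dagger (binRep (t.1.val + 1))).length ≤ 2 * m := by
    split_ifs
    · simp
    · rw [length_dagger]
      have := length_binRep_le (t.1.val + 1)
      omega
  rw [encTransition, List.length_append, length_diamond]
  omega

theorem length_encTransition_ge {m : ℕ} (j : Fin m) (t : Fin m × List Bool) :
    t.2.length ≤ (encTransition j t).length := by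
  rw [encTransition, List.length_append, length_diamond]
  omega

theorem stdEnc_length_le (T : Transducer) {L : ℕ} (hL : ∀ q b, (T.delta q b).2.length ≤ L) :
    (stdEnc T).length ≤ T.n * (4 * (T.n + L + 1)) := by
  rw [stdEnc, List.length_flatMap]
  refine (List.sum_le_card_nsmul _ (4 * (T.n + L + 1)) ?_).trans (by simp)
  simp only [List.mem_map, List.mem_finRange, true_and]
  rintro _ ⟨j, rfl⟩
  have h₀ := length_encTransition_le j (T.delta j false)
  have h₁ := length_encTransition_le j (T.delta j true)
  have := hL j false
  have := hL j true
  rw [List.length_append]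
  omega

theorem length_delta_le_stdEnc (T : Transducer) (q : Fin T.n) (b : Bool) :
    (T.delta q b).2.length ≤ (stdEnc T).length := by
  have hmem : encTransition q (T.delta q false) ++ encTransition q (T.delta q true) ∈
      (List.finRange T.n).map fun j =>
        encTransition j (T.delta j false) ++ encTransition j (T.delta j true) :=
    List.mem_map_of_mem (List.mem_finRange q)
  have hle := (List.infix_of_mem_flatten hmem).length_le
  rw [← List.flatMap_def] at hle
  have := length_encTransition_ge q (T.delta q b)
  cases b <;> simp only [List.length_append, stdEnc] at hle ⊢ <;> omega

namespace BlockWord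

def block (c : ℕ) : List Bool := List.replicate c false ++ [true]

def marker (i : ℕ) : List Bool := true :: block i

def blocks (cs : List ℕ) : List Bool := cs.flatMap block

theorem blocks_cons (c : ℕ) (cs : List ℕ) :
    blocks (c :: cs) = List.replicate c false ++ true :: blocks cs := by
  simp [blocks, block]

theorem exists_suffix_of_true_cons_infix {z : List Bool} {cs : List ℕ}
    (h : true :: z <:+: blocks cs) : ∃ ds, ds <:+ cs ∧ z <+: blocks ds := by
  induction cs with
  | nil => simp [blocks] at h
  | cons c cs ih =>
    rw [blocks_cons] at h
    rcases List.infix_cons_iff.1 (List.cons_infix_of_cons_infix_replicate_append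
        (by decide) c h) with h | h
    · exact ⟨cs, List.suffix_cons c cs, (List.cons_prefix_cons.1 h).2⟩
    · obtain ⟨ds, hds, hz⟩ := ih h
      exact ⟨ds, hds.trans (List.suffix_cons c cs), hz⟩

theorem exists_cons_of_block_append_prefix {a : ℕ} {r : List Bool} {ds : List ℕ}
    (h : block a ++ r <+: blocks ds) : ∃ ds', ds = a :: ds' ∧ r <+: blocks ds' := by
  induction a generalizing ds with
  | zero =>
    obtain _ | ⟨_ | c, ds⟩ := ds
    · simp [block, blocks] at h
    · exact ⟨ds, rfl, by simpa [block, blocks] using h⟩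
    · simp [block, blocks, List.replicate_succ] at h
  | succ a ih =>
    obtain _ | ⟨_ | c, ds⟩ := ds
    · simp [block, blocks] at h
    · simp [block, blocks, List.replicate_succ] at h
    · obtain ⟨ds', hds', hr⟩ := ih (ds := c :: ds)
        (by simpa [block, blocks, List.replicate_succ] using h)
      obtain ⟨rfl, rfl⟩ := List.cons_eq_cons.1 hds'
      exact ⟨_, rfl, hr⟩

theorem mem_of_marker_infix {b : ℕ} {ds : List ℕ} (h : marker b <:+: blocks ds) : b ∈ ds := by
  obtain ⟨es, hes, hb⟩ := exists_suffix_of_true_cons_infix h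
  obtain ⟨es', rfl, -⟩ := exists_cons_of_block_append_prefix (r := []) (by simpa using hb)
  exact hes.subset List.mem_cons_self

theorem le_of_marker_append_marker_infix {cs : List ℕ} (hcs : cs.Pairwise (· ≤ ·)) {a b : ℕ}
    {t : List Bool} (h : marker a ++ t ++ marker b <:+: blocks cs) : a ≤ b := by
  obtain ⟨ds, hds, hpre⟩ := exists_suffix_of_true_cons_infix (z := block a ++ (t ++ marker b))
    (by simpa [marker] using h)
  obtain ⟨ds', rfl, hpre'⟩ := exists_cons_of_block_append_prefix hpre
  have hb : b ∈ ds' := mem_of_marker_infix ((List.suffix_append t _).isInfix.trans hpre'.isInfix)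
  exact List.rel_of_pairwise_cons (hcs.sublist hds.sublist) hb

def markerSet (K : ℕ) (v : List Bool) : Finset ℕ :=
  (Finset.Icc 1 K).filter fun i => marker i <:+: v

def markerSurplus (K : ℕ) (v : List Bool) : ℕ := (markerSet K v).card - 1

theorem markerSet_mono (K : ℕ) {u v : List Bool} (h : u <:+: v) :
    markerSet K u ⊆ markerSet K v := by
  intro i hi
  simp only [markerSet, Finset.mem_filter] at hi ⊢
  exact ⟨hi.1, hi.2.trans h⟩

theorem markerSurplus_le (K : ℕ) (v : List Bool) : markerSurplus K v ≤ K - 1 := by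
  have := Finset.card_le_card (Finset.filter_subset (fun i => marker i <:+: v) (Finset.Icc 1 K))
  simp only [Nat.card_Icc] at this
  unfold markerSurplus markerSet
  omega

theorem card_markerSet_inter_le_one {cs : List ℕ} (hcs : cs.Pairwise (· ≤ ·)) {u v : List Bool}
    (h : u ++ v <:+: blocks cs) (K : ℕ) : (markerSet K u ∩ markerSet K v).card ≤ 1 := by
  have order : ∀ a b, marker a <:+: u → marker b <:+: v → a ≤ b := by
    rintro a b ⟨s₁, t₁, rfl⟩ ⟨s₂, t₂, rfl⟩
    exact le_of_marker_append_marker_infix hcs (t := t₁ ++ s₂)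
      (List.IsInfix.trans ⟨s₁, t₂, by simp⟩ h)
  refine Finset.card_le_one.2 fun a ha b hb => ?_
  simp only [Finset.mem_inter, markerSet, Finset.mem_filter] at ha hb
  exact le_antisymm (order a b ha.1.2 hb.2.2) (order b a hb.1.2 ha.2.2)

theorem markerSurplus_add_le {cs : List ℕ} (hcs : cs.Pairwise (· ≤ ·)) {u v : List Bool}
    (h : u ++ v <:+: blocks cs) (K : ℕ) :
    markerSurplus K u + markerSurplus K v ≤ markerSurplus K (u ++ v) := by
  have hunion := Finset.card_le_card (Finset.union_subset
    (markerSet_mono K (List.prefix_append u v).isInfix)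
    (markerSet_mono K (List.suffix_append u v).isInfix))
  have hinter := card_markerSet_inter_le_one hcs h K
  have := Finset.card_union_add_card_inter (markerSet K u) (markerSet K v)
  have : (markerSet K u ∩ markerSet K v).card ≤ (markerSet K u).card :=
    Finset.card_le_card Finset.inter_subset_left
  have : (markerSet K u ∩ markerSet K v).card ≤ (markerSet K v).card :=
    Finset.card_le_card Finset.inter_subset_right
  unfold markerSurplus
  omega

theorem sum_markerSurplus_le {cs : List ℕ} (hcs : cs.Pairwise (· ≤ ·)) (K : ℕ)
    (E : List (List Bool)) (h : E.flatten <:+: blocks cs) :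
    (E.map (markerSurplus K)).sum ≤ markerSurplus K E.flatten := by
  induction E with
  | nil => simp
  | cons e E ih =>
    rw [List.flatten_cons] at h ⊢
    have := ih ((List.suffix_append e _).isInfix.trans h)
    have := markerSurplus_add_le hcs h K
    simp only [List.map_cons, List.sum_cons]
    omega

theorem blocks_replicate_mul (k m c : ℕ) :
    blocks (List.replicate (k * m) c) =
      (List.replicate k (blocks (List.replicate m c))).flatten := by
  rw [blocks, ← List.flatten_replicate_replicate, List.flatMap_def, List.map_flatten,
    List.flatten_flatten, List.map_replicate, List.map_replicate]
  rfl

theorem length_blocks_replicate (m c : ℕ) : (blocks (List.replicate m c)).length = m * (c + 1) := by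
  simp [blocks, block, List.flatMap_replicate, List.sum_replicate]

theorem pred_le_infixCount_marker_blocks_replicate (c m : ℕ) :
    m - 1 ≤ (marker c).infixCount (blocks (List.replicate m c)) := by
  induction m with
  | zero => simp
  | succ m ih =>
    obtain _ | m := m
    · simp
    have hpre : marker c <+: true :: blocks (List.replicate (m + 1) c) := by
      rw [marker, List.cons_prefix_cons, List.replicate_succ, blocks, List.flatMap_cons]
      exact ⟨rfl, List.prefix_append _ _⟩
    rw [List.replicate_succ, blocks_cons]
    refine le_trans ?_ (List.infixCount_le_of_infix _ (List.suffix_append _ _).isInfix)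
    simp only [List.infixCount, hpre, if_true]
    omega

theorem infixCount_le_mul_markerSurplus {K i : ℕ} (hi : i ∈ Finset.Icc 1 K) {e : List Bool}
    (hown : i ∈ markerSet K e → 2 ≤ (markerSet K e).card) :
    (marker i).infixCount e ≤ e.length * markerSurplus K e := by
  rcases Nat.eq_zero_or_pos ((marker i).infixCount e) with h | h
  · simp [h]
  have hmem : i ∈ markerSet K e :=
    Finset.mem_filter.2 ⟨hi, List.infix_of_infixCount_pos h⟩
  have : 1 ≤ markerSurplus K e := by
    have := hown hmem
    unfold markerSurplus
    omega
  calc (marker i).infixCount e ≤ e.length := List.infixCount_le_length _ _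
    _ ≤ e.length * markerSurplus K e := Nat.le_mul_of_pos_right _ this

/-- Occurrences of the marker `i` either straddle two transition outputs or lie in one of the
at most `K - 1` outputs (counted with multiplicity) that contain a second marker. -/
theorem infixCount_marker_le {cs : List ℕ} (hcs : cs.Pairwise (· ≤ ·)) {T : Transducer}
    {p : List Bool} (hout : T.output p = blocks cs) {K i : ℕ} (hi : i ∈ Finset.Icc 1 K)
    (hown : ∀ q b, i ∈ markerSet K (T.delta q b).2 → 2 ≤ (markerSet K (T.delta q b).2).card) :
    (marker i).infixCount (blocks cs) ≤ (K + 2) * ((stdEnc T).length + p.length) := by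
  obtain ⟨E, hE, hlen, hmem⟩ := T.exists_run_snd_eq_flatten T.start p
  rw [Transducer.output] at hout
  rw [hout] at hE
  have hi' := Finset.mem_Icc.1 hi
  have hsum : (E.map (marker i).infixCount).sum ≤ (stdEnc T).length * (K - 1) :=
    calc (E.map (marker i).infixCount).sum
        ≤ (E.map fun e => (stdEnc T).length * markerSurplus K e).sum := by
          refine List.sum_le_sum fun e he => ?_
          obtain ⟨q, b, rfl⟩ := hmem e he
          exact (infixCount_le_mul_markerSurplus hi (hown q b)).trans
            (Nat.mul_le_mul_right _ (length_delta_le_stdEnc T q b))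
      _ = (stdEnc T).length * (E.map (markerSurplus K)).sum := List.sum_map_mul_left _ _ _
      _ ≤ (stdEnc T).length * (K - 1) := by
          gcongr
          exact (sum_markerSurplus_le hcs K E (hE ▸ List.infix_refl _)).trans
            (markerSurplus_le K _)
  have hsplit := List.infixCount_flatten_le (marker i) E
  have hmarker : (marker i).length = i + 2 := by simp [marker, block]
  rw [← hE, hlen, hmarker] at hsplit
  have : (stdEnc T).length * (K - 1) ≤ (stdEnc T).length * (K + 2) :=
    Nat.mul_le_mul_left _ (by omega)
  have : p.length * (i + 2) ≤ p.length * (K + 2) := Nat.mul_le_mul_left _ (by omega)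
  linarith

end BlockWord

namespace Staircase

open BlockWord

def stairs (n k : ℕ) : List ℕ := (List.range' 1 (2 * n + 1)).flatMap (List.replicate (k * k))

def word (n k : ℕ) : List Bool := blocks (stairs n k)

theorem pairwise_stairs (n k : ℕ) : (stairs n k).Pairwise (· ≤ ·) := by
  refine List.pairwise_flatMap.2 ⟨fun c _ => List.pairwise_replicate.2 (Or.inr le_rfl), ?_⟩
  refine (List.pairwise_lt_range' (s := 1) (n := 2 * n + 1)).imp fun hab x hx y hy => ?_
  rw [List.eq_of_mem_replicate hx, List.eq_of_mem_replicate hy]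
  exact hab.le

theorem pred_le_infixCount_marker_word (n k : ℕ) {i : ℕ} (hi : i ∈ Finset.Icc 1 (2 * n + 1)) :
    k * k - 1 ≤ (marker i).infixCount (word n k) := by
  have hmem : i ∈ List.range' 1 (2 * n + 1) := by
    rw [List.mem_range'_1]
    rw [Finset.mem_Icc] at hi
    omega
  have hinfix : List.replicate (k * k) i <:+: stairs n k := by
    rw [stairs, List.flatMap_def]
    exact List.infix_of_mem_flatten (List.mem_map_of_mem hmem)
  exact (pred_le_infixCount_marker_blocks_replicate i (k * k)).trans
    (List.infixCount_le_of_infix _ (hinfix.flatMap block))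

def transducer (n k : ℕ) : Transducer where
  n := 2 * n + 1
  npos := by omega
  delta j b :=
    match b with
    | false => (j, blocks (List.replicate k (j.val + 1)))
    | true => if h : j.val + 1 < 2 * n + 1 then (⟨j.val + 1, h⟩, []) else (j, [])

def input (n k : ℕ) : List Bool :=
  List.replicate k false ++ (List.replicate (2 * n) (true :: List.replicate k false)).flatten

theorem length_input (n k : ℕ) : (input n k).length = k + 2 * n * (k + 1) := by
  simp [input, List.sum_replicate]

theorem run_transducer_snd (n k : ℕ) (d s : ℕ) (hs : s + d < 2 * n + 1) :
    ((transducer n k).run ⟨s, by simp [transducer]; omega⟩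
      (List.replicate k false ++ (List.replicate d (true :: List.replicate k false)).flatten)).2 =
    blocks ((List.range' (s + 1) (d + 1)).flatMap (List.replicate (k * k))) := by
  induction d generalizing s with
  | zero =>
    rw [(transducer n k).run_replicate_append_snd rfl, ← blocks_replicate_mul]
    simp [blocks, Transducer.run]
  | succ d ih =>
    have hstep : (transducer n k).delta ⟨s, by simp [transducer]; omega⟩ true =
        (⟨s + 1, by simp [transducer]; omega⟩, []) := by
      simp [transducer, show s + 1 < 2 * n + 1 by omega]
    rw [(transducer n k).run_replicate_append_snd rfl, ← blocks_replicate_mul,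
      List.replicate_succ, List.flatten_cons, List.cons_append, Transducer.run]
    simp only [hstep, List.nil_append]
    rw [ih (s + 1) (by omega), List.range'_succ (s := s + 1) (n := d + 1), List.flatMap_cons,
      blocks, blocks, blocks, List.flatMap_append]

theorem output_transducer (n k : ℕ) : (transducer n k).output (input n k) = word n k :=
  run_transducer_snd n k (2 * n) 0 (by omega)

theorem exists_Cstd_word_le (n : ℕ) : ∃ M, ∀ k, 0 < k → Cstd (word n k) ≤ M * k := by
  refine ⟨8 * (2 * n + 1) * (2 * n + 2) + 4 * n + 1, fun k hk => ?_⟩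
  have hdelta : ∀ q b, ((transducer n k).delta q b).2.length ≤ k * (2 * n + 2) := by
    rintro ⟨q, hq : q < 2 * n + 1⟩ (_ | _)
    · simp only [transducer, length_blocks_replicate]
      exact Nat.mul_le_mul_left _ (by omega)
    · simp only [transducer]
      split_ifs <;> simp
  have henc := stdEnc_length_le (transducer n k) hdelta
  have hC := Nat.sInf_le (show (stdEnc (transducer n k)).length + (input n k).length ∈
    stdSizes (word n k) from ⟨_, _, output_transducer n k, rfl⟩)
  rw [length_input] at hC
  change _ ≤ (2 * n + 1) * (4 * (2 * n + 1 + k * (2 * n + 2) + 1)) at henc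
  have : (2 * n + 1) * (2 * n + 2) ≤ (2 * n + 1) * (2 * n + 2) * k := Nat.le_mul_of_pos_right _ hk
  unfold Cstd
  nlinarith

end Staircase

theorem stmt0 : ∀ n : ℕ, ∃ x : List Bool, x ∉ stdLle n := by
  intro n
  obtain ⟨M, hM⟩ := Staircase.exists_Cstd_word_le n
  set k := (2 * n + 3) * M + 2
  refine ⟨Staircase.word n k, ?_⟩
  rintro ⟨T, p, hout, hmin, hsize⟩
  have hcard : Fintype.card (Fin T.n × Bool) < 2 * n + 1 := by
    have : T.n ≤ n := hsize
    simp only [Fintype.card_prod, Fintype.card_fin, Fintype.card_bool]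
    omega
  obtain ⟨i, hi, hown⟩ := Finset.exists_mem_Icc_forall_two_le_card
    (fun t : Fin T.n × Bool => BlockWord.markerSet (2 * n + 1) (T.delta t.1 t.2).2) hcard
  have hlow := Staircase.pred_le_infixCount_marker_word n k hi
  have hup := BlockWord.infixCount_marker_le (Staircase.pairwise_stairs n k) hout hi
    (fun q b => hown (q, b))
  have hC : (stdEnc T).length + p.length ≤ M * k := hmin ▸ hM k (by omega)
  have key : k * k - 1 ≤ (2 * n + 3) * M * k :=
    calc k * k - 1 ≤ (BlockWord.marker i).infixCount (Staircase.word n k) := hlow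
      _ ≤ (2 * n + 3) * (M * k) := hup.trans (Nat.mul_le_mul_left _ hC)
      _ = (2 * n + 3) * M * k := by ring
  have hk : (2 * n + 3) * M * k + 2 * k = k * k := by ring
  omega
end

section
/- For any computable encoding S of all transducers and any m ≥ 1, the language L^S_{≤m} is decidable. -/
/-!
Since `σ_id`, a code of the identity transducer, describes `x` by `(σ_id, x)`, we have
`C_S(x) ≤ |σ_id| + |x|`, so every minimal description `(σ, p)` of `x` has `|σ|, |p| ≤ |σ_id| + |x|`.
For each of these finitely many `σ`, computability of `S` yields the standard encoding of
`T^S_σ`, from which a primitive recursive parser recovers the transition table of `T^S_σ`,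
hence its size and its output on `p`. So `x ∈ L^S_{≤ m}` is decided by listing the
descriptions of `x` among these candidates and checking whether one of minimal cost uses at most
`m` states.
-/

theorem Computable.list_map {α β σ : Type*} [Primcodable α] [Primcodable β] [Primcodable σ]
    {f : α → List β} {g : α → β → σ} (hf : Computable f) (hg : Computable₂ g) :
    Computable fun a => (f a).map (g a) := by
  have step : Computable₂ fun a (p : ℕ × List σ) => p.2 ++ ((f a)[p.1]?.map (g a)).toList :=
    (Computable.list_append.comp (Computable.snd.comp Computable.snd)
      (Primrec.optionToList.to_comp.comp (Computable.option_map
        (Computable.list_getElem?.comp (hf.comp Computable.fst)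
          (Computable.fst.comp Computable.snd))
        (hg.comp (Computable.fst.comp Computable.fst) Computable.snd).to₂))).to₂
  refine (Computable.nat_rec (Computable.list_length.comp hf) (Computable.const []) step).of_eq
    fun a => ?_
  suffices ∀ k, Nat.rec (motive := fun _ => List σ) []
      (fun i l => l ++ ((f a)[i]?.map (g a)).toList) k = ((f a).take k).map (g a) by
    simpa using this (f a).length
  intro k
  induction k with
  | zero => rfl
  | succ k ih => rw [List.take_add_one, List.map_append, ← ih, ← Option.toList_map]

def wordsUpTo : ℕ → List (List Bool)
  | 0 => [[]]
  | n + 1 => [] :: (wordsUpTo n).flatMap fun w => [false :: w, true :: w]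

theorem mem_wordsUpTo {n : ℕ} {w : List Bool} : w ∈ wordsUpTo n ↔ w.length ≤ n := by
  induction n generalizing w with
  | zero => simp [wordsUpTo]
  | succ n ih =>
    cases w with
    | nil => simp [wordsUpTo]
    | cons a w => cases a <;> simp [wordsUpTo, ih]

theorem primrec_wordsUpTo : Primrec wordsUpTo := by
  have step : Primrec₂ fun (_ : ℕ) (ws : List (List Bool)) =>
      [] :: ws.flatMap fun w => [false :: w, true :: w] :=
    (Primrec.list_cons.comp (Primrec.const []) (Primrec.list_flatMap Primrec.snd
      (Primrec.list_cons.comp (Primrec.list_cons.comp (Primrec.const false) Primrec.snd)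
        (Primrec.list_cons.comp (Primrec.list_cons.comp (Primrec.const true) Primrec.snd)
          (Primrec.const []))).to₂)).to₂
  refine (Primrec.nat_rec₁ [[]] step).of_eq fun n => ?_
  induction n with
  | zero => rfl
  | succ n ih => simp [wordsUpTo, ← ih]

namespace StdEnc

section PairUp

variable {α : Type*}

def pairUp : List α → List (α × α)
  | a :: b :: l => (a, b) :: pairUp l
  | _ => []

theorem pairUp_ne_nil {l : List α} (hl : 2 ≤ l.length) : pairUp l ≠ [] := by
  match l, hl with
  | _ :: _ :: _, _ => simp [pairUp]

theorem pairUp_flatMap {β : Type*} (f g : β → α) (l : List β) :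
    pairUp (l.flatMap fun x => [f x, g x]) = l.map fun x => (f x, g x) := by
  induction l with
  | nil => rfl
  | cons x l ih => simp [pairUp, ih]

theorem foldl_pairUp : ∀ (l : List α) (acc : List (α × α)),
    (l.foldl (fun s b => s.1.elim (some b, s.2) fun a => (none, s.2 ++ [(a, b)]))
      (none, acc)).2 = acc ++ pairUp l
  | [], _ => by simp [pairUp]
  | [_], _ => by simp [pairUp]
  | a :: b :: l, acc => by simp [pairUp, foldl_pairUp l]

theorem primrec_pairUp [Primcodable α] : Primrec (pairUp (α := α)) := by
  have step : Primrec₂ fun (_ : List α) (sb : (Option α × List (α × α)) × α) =>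
      sb.1.1.elim (some sb.2, sb.1.2) fun a => (none, sb.1.2 ++ [(a, sb.2)]) := by
    refine (Primrec.option_casesOn (Primrec.fst.comp (Primrec.fst.comp Primrec.snd))
      ((Primrec.option_some.comp (Primrec.snd.comp Primrec.snd)).pair
        (Primrec.snd.comp (Primrec.fst.comp Primrec.snd)))
      ((Primrec.const none).pair (Primrec.list_concat.comp
        (Primrec.snd.comp (Primrec.fst.comp (Primrec.snd.comp Primrec.fst)))
        (Primrec.snd.pair (Primrec.snd.comp (Primrec.snd.comp Primrec.fst))))).to₂).to₂.of_eq ?_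
    rintro _ ⟨⟨_ | _, _⟩, _⟩ <;> rfl
  exact (Primrec.snd.comp (Primrec.list_foldl Primrec.id (Primrec.const (none, [])) step)).of_eq
    fun l => by simpa using foldl_pairUp l []

end PairUp

/-- Reads a `dagger`-code off a list of (bit, end-flag) pairs; with `neg = true` bits and flags
are complemented, which is how `diamond` codes are read. -/
def readCode (neg : Bool) : List (Bool × Bool) → List Bool × List (Bool × Bool)
  | [] => ([], [])
  | (a, b) :: ps =>
    if neg ^^ b then ([neg ^^ a], ps) else ((neg ^^ a) :: (readCode neg ps).1, (readCode neg ps).2)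

theorem readCode_map_xor_dagger (neg : Bool) : ∀ (w : List Bool), w ≠ [] → ∀ s,
    readCode neg (pairUp ((dagger w).map (neg ^^ ·) ++ s)) = (w, pairUp s)
  | [a], _, s => by simp [dagger, pairUp, readCode]
  | a :: b :: v, _, s => by
    simp [dagger, pairUp, readCode, readCode_map_xor_dagger neg (b :: v) (by simp) s]

theorem readCode_dagger {w : List Bool} (hw : w ≠ []) (s : List Bool) :
    readCode false (pairUp (dagger w ++ s)) = (w, pairUp s) := by
  simpa using readCode_map_xor_dagger false w hw s

theorem readCode_diamond (v s : List Bool) :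
    readCode true (pairUp (diamond v ++ s)) = (true :: v, pairUp s) := by
  simpa [diamond] using readCode_map_xor_dagger true (true :: v) (by simp) s

theorem headI_pairUp_map_xor_dagger (neg a : Bool) (w s : List Bool) :
    (pairUp ((dagger (a :: w)).map (neg ^^ ·) ++ s)).headI.1 = (neg ^^ a) := by
  cases w <;> simp [dagger, pairUp]

theorem length_dagger : ∀ w : List Bool, (dagger w).length = 2 * w.length
  | [] => rfl
  | [_] => rfl
  | a :: b :: v => by simp only [dagger, List.length_cons, length_dagger (b :: v)]; ring

theorem primrec_readCode : Primrec₂ readCode := by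
  have hxor := Primrec.dom_bool₂ xor
  have step : Primrec₂ fun (neg : Bool)
      (p : (Bool × Bool) × List (Bool × Bool) × (List Bool × List (Bool × Bool))) =>
      bif neg ^^ p.1.2 then ([neg ^^ p.1.1], p.2.1) else ((neg ^^ p.1.1) :: p.2.2.1, p.2.2.2) := by
    have bit : Primrec fun q : Bool × (Bool × Bool) × List (Bool × Bool) ×
        (List Bool × List (Bool × Bool)) => q.1 ^^ q.2.1.1 :=
      hxor.comp Primrec.fst (Primrec.fst.comp (Primrec.fst.comp Primrec.snd))
    exact (Primrec.cond (hxor.comp Primrec.fst (Primrec.snd.comp (Primrec.fst.comp Primrec.snd)))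
      ((Primrec.list_cons.comp bit (Primrec.const [])).pair
        (Primrec.fst.comp (Primrec.snd.comp Primrec.snd)))
      ((Primrec.list_cons.comp bit
        (Primrec.fst.comp (Primrec.snd.comp (Primrec.snd.comp Primrec.snd)))).pair
        (Primrec.snd.comp (Primrec.snd.comp (Primrec.snd.comp Primrec.snd))))).to₂
  refine (Primrec.list_rec (σ := List Bool × List (Bool × Bool)) Primrec.snd
    (Primrec.const ([], []))
    (step.comp (Primrec.fst.comp Primrec.fst) Primrec.snd).to₂).to₂.of_eq ?_
  intro neg ps
  induction ps with
  | nil => rfl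
  | cons p ps ih =>
    simp only [readCode, ← ih]
    cases neg ^^ p.2 <;> rfl

def decodeBin (l : List Bool) : ℕ := Nat.ofDigits 2 (l.reverse.map fun b => cond b 1 0)

theorem decodeBin_binRep (i : ℕ) : decodeBin (binRep i) = i := by
  simp [decodeBin, binRep, ← Nat.digits_two_eq_bits, Nat.ofDigits_digits]

theorem binRep_eq_true_cons {i : ℕ} (hi : i ≠ 0) : ∃ l, binRep i = true :: l := by
  have hne : Nat.bits i ≠ [] := by
    rw [Ne, ← List.map_eq_nil_iff (f := fun b : Bool => cond b 1 0), ← Nat.digits_two_eq_bits]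
    exact Nat.digits_ne_nil_iff_ne_zero.mpr hi
  have hlast := Nat.getLast_digit_ne_zero 2 hi
  simp only [Nat.digits_two_eq_bits, List.getLast_map] at hlast
  refine ⟨(Nat.bits i).dropLast.reverse, ?_⟩
  rw [binRep, ← List.dropLast_append_getLast hne]
  revert hlast
  cases (Nat.bits i).getLast hne <;> simp

theorem primrec_decodeBin : Primrec decodeBin := by
  have h : Primrec₂ fun (_ : List Bool) (p : Bool × ℕ) => cond p.1 1 0 + 2 * p.2 :=
    (Primrec.nat_add.comp
      (Primrec.cond (Primrec.fst.comp Primrec.snd) (Primrec.const 1) (Primrec.const 0))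
      (Primrec.nat_mul.comp (Primrec.const 2) (Primrec.snd.comp Primrec.snd))).to₂
  exact (Primrec.list_foldr Primrec.list_reverse (Primrec.const 0) h).of_eq fun l => by
    simp [decodeBin, Nat.ofDigits_eq_foldr, List.foldl_map]

/-- Target and output of a transition as written in the standard encoding, which omits the
target of a self-loop: it is `none` here. -/
abbrev Edge := Option ℕ × List Bool

abbrev Table := List (Edge × Edge)

def toEdge {n : ℕ} (j : Fin n) (t : Fin n × List Bool) : Edge :=
  (if t.1 = j then none else some t.1.val, t.2)

def readTransition (ps : List (Bool × Bool)) : Edge × List (Bool × Bool) :=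
  if ps.headI.1 then
    let target := readCode false ps
    let out := readCode true target.2
    ((some (decodeBin target.1 - 1), out.1.tail), out.2)
  else
    let out := readCode true ps
    ((none, out.1.tail), out.2)

theorem readTransition_encTransition {n : ℕ} (j : Fin n) (t : Fin n × List Bool)
    (s : List Bool) :
    readTransition (pairUp (encTransition j t ++ s)) = (toEdge j t, pairUp s) := by
  have hdiamond : (pairUp (diamond t.2 ++ s)).headI.1 = false := by
    simpa [diamond] using headI_pairUp_map_xor_dagger true true t.2 s
  by_cases h : t.1 = j
  · simp [encTransition, toEdge, h, readTransition, hdiamond, readCode_diamond]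
  · obtain ⟨l, hl⟩ := binRep_eq_true_cons (Nat.succ_ne_zero t.1.val)
    have hhead : (pairUp (dagger (binRep (t.1.val + 1)) ++ (diamond t.2 ++ s))).headI.1 := by
      simpa [hl] using headI_pairUp_map_xor_dagger false true l (diamond t.2 ++ s)
    have hw : binRep (t.1.val + 1) ≠ [] := by simp [hl]
    simp [encTransition, toEdge, h, readTransition, hhead, readCode_dagger hw, readCode_diamond,
      decodeBin_binRep]

theorem two_le_length_encTransition {n : ℕ} (j : Fin n) (t : Fin n × List Bool) :
    2 ≤ (encTransition j t).length := by
  simp only [encTransition, diamond, List.length_append, List.length_map, length_dagger,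
    List.length_cons]
  omega

def parseStep (st : List Edge × List (Bool × Bool)) : List Edge × List (Bool × Bool) :=
  if st.2 = [] then st else (st.1 ++ [(readTransition st.2).1], (readTransition st.2).2)

/-- Each step reads one transition and consumes at least one pair of bits, so `e.length`
steps read all of them. -/
def parse (e : List Bool) : Table :=
  pairUp (parseStep^[e.length] ([], pairUp e)).1

theorem primrec_readTransition : Primrec readTransition := by
  have code (neg : Bool) : Primrec (readCode neg) :=
    primrec_readCode.comp (Primrec.const neg) Primrec.id
  have target := code false
  have out₁ := primrec_readCode.comp (Primrec.const true) (Primrec.snd.comp target)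
  have out₂ := code true
  have isTarget : PrimrecPred fun ps : List (Bool × Bool) => ps.headI.1 = true :=
    Primrec.eq.comp (Primrec.fst.comp Primrec.list_headI) (Primrec.const true)
  exact Primrec.ite isTarget
    (((Primrec.option_some.comp (Primrec.nat_sub.comp (primrec_decodeBin.comp
      (Primrec.fst.comp target)) (Primrec.const 1))).pair
      (Primrec.list_tail.comp (Primrec.fst.comp out₁))).pair (Primrec.snd.comp out₁))
    (((Primrec.const none).pair (Primrec.list_tail.comp (Primrec.fst.comp out₂))).pair
      (Primrec.snd.comp out₂))

theorem primrec_parse : Primrec parse := by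
  have step : Primrec parseStep := by
    have read : Primrec fun st : List Edge × List (Bool × Bool) => readTransition st.2 :=
      primrec_readTransition.comp Primrec.snd
    exact Primrec.ite (Primrec.eq.comp Primrec.snd (Primrec.const [])) Primrec.id
      ((Primrec.list_concat.comp Primrec.fst (Primrec.fst.comp read)).pair
        (Primrec.snd.comp read))
  exact primrec_pairUp.comp (Primrec.fst.comp (Primrec.nat_iterate Primrec.list_length
    ((Primrec.const []).pair primrec_pairUp) (step.comp Primrec.snd).to₂))

theorem iterate_parseStep {n : ℕ} (d : Fin n → Bool → Fin n × List Bool) (s : List Bool) :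
    ∀ (l : List (Fin n)) (ts : List Edge),
    parseStep^[2 * l.length] (ts, pairUp ((l.flatMap fun j =>
      encTransition j (d j false) ++ encTransition j (d j true)) ++ s)) =
    (ts ++ l.flatMap fun j => [toEdge j (d j false), toEdge j (d j true)], pairUp s)
  | [], ts => by simp
  | j :: l, ts => by
    have hstep : ∀ t (r : List Bool) (ts : List Edge),
        parseStep (ts, pairUp (encTransition j t ++ r)) = (ts ++ [toEdge j t], pairUp r) := by
      intro t r ts
      have hne := pairUp_ne_nil (l := encTransition j t ++ r)
        (by simpa using le_add_right (two_le_length_encTransition j t))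
      simp [parseStep, hne, readTransition_encTransition]
    rw [List.length_cons, Nat.mul_succ, Function.iterate_add_apply]
    simp only [List.flatMap_cons, List.append_assoc]
    rw [Function.iterate_succ_apply, Function.iterate_one, hstep, hstep,
      iterate_parseStep d s l]
    simp

def simStep (r : Table) (s : ℕ × List Bool) (a : Bool) : ℕ × List Bool :=
  r[s.1]?.elim s fun e => ((cond a e.2 e.1).1.getD s.1, s.2 ++ (cond a e.2 e.1).2)

def simulate (r : Table) (p : List Bool) : List Bool :=
  (p.foldl (simStep r) (0, [])).2

theorem primrec_simulate : Primrec₂ simulate := by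
  have edge : Primrec fun x : ((Table × List Bool) × (ℕ × List Bool) × Bool) × (Edge × Edge) =>
      cond x.1.2.2 x.2.2 x.2.1 :=
    Primrec.cond (Primrec.snd.comp (Primrec.snd.comp Primrec.fst))
      (Primrec.snd.comp Primrec.snd) (Primrec.fst.comp Primrec.snd)
  have follow : Primrec₂ fun (x : (Table × List Bool) × (ℕ × List Bool) × Bool)
      (e : Edge × Edge) =>
      ((cond x.2.2 e.2 e.1).1.getD x.2.1.1, x.2.1.2 ++ (cond x.2.2 e.2 e.1).2) :=
    ((Primrec.option_getD.comp (Primrec.fst.comp edge)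
      (Primrec.fst.comp (Primrec.fst.comp (Primrec.snd.comp Primrec.fst)))).pair
      (Primrec.list_append.comp
        (Primrec.snd.comp (Primrec.fst.comp (Primrec.snd.comp Primrec.fst)))
        (Primrec.snd.comp edge))).to₂
  have step : Primrec₂ fun (rp : Table × List Bool) (sa : (ℕ × List Bool) × Bool) =>
      simStep rp.1 sa.1 sa.2 :=
    (Primrec.option_casesOn
      (Primrec.list_getElem?.comp (Primrec.fst.comp Primrec.fst)
        (Primrec.fst.comp (Primrec.fst.comp Primrec.snd)))
      (Primrec.fst.comp Primrec.snd) follow).to₂.of_eq fun r s => by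
        simp only [simStep]
        cases r.1[s.1.1]? <;> rfl
  exact (Primrec.snd.comp (Primrec.list_foldl Primrec.snd (Primrec.const (0, [])) step)).to₂

end StdEnc

namespace Transducer

open StdEnc

def table (T : Transducer) : Table :=
  (List.finRange T.n).map fun j => (toEdge j (T.delta j false), toEdge j (T.delta j true))

theorem length_table (T : Transducer) : T.table.length = T.size := by
  simp [table, size]

theorem two_mul_le_length_stdEnc (T : Transducer) : 2 * T.n ≤ (stdEnc T).length := by
  suffices ∀ l : List (Fin T.n), 2 * l.length ≤ (l.flatMap fun j =>
      encTransition j (T.delta j false) ++ encTransition j (T.delta j true)).length by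
    simpa only [stdEnc, List.length_finRange] using this (List.finRange T.n)
  intro l
  induction l with
  | nil => simp
  | cons j l ih =>
    have := two_le_length_encTransition j (T.delta j false)
    simp only [List.flatMap_cons, List.length_append, List.length_cons]
    omega

theorem parse_stdEnc (T : Transducer) : parse (stdEnc T) = T.table := by
  have hfix : Function.IsFixedPt parseStep ((List.finRange T.n).flatMap fun j =>
      [toEdge j (T.delta j false), toEdge j (T.delta j true)], []) := by
    simp [Function.IsFixedPt, parseStep]
  obtain ⟨k, hk⟩ := Nat.exists_eq_add_of_le' T.two_mul_le_length_stdEnc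
  have h := iterate_parseStep T.delta [] (List.finRange T.n) []
  simp only [List.append_nil, List.nil_append, List.length_finRange] at h
  rw [parse, hk, Function.iterate_add_apply, stdEnc, h,
    show pairUp ([] : List Bool) = [] from rfl, (hfix.iterate k).eq]
  exact pairUp_flatMap _ _ _

theorem simStep_table (T : Transducer) (q : Fin T.n) (out : List Bool) (a : Bool) :
    simStep T.table (q.val, out) a = ((T.delta q a).1.val, out ++ (T.delta q a).2) := by
  have hq : T.table[q.val]? = some (toEdge q (T.delta q false), toEdge q (T.delta q true)) := by
    simp [table]
  have target (t : Fin T.n × List Bool) : (toEdge q t).1.getD q.val = t.1.val := by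
    unfold toEdge
    split_ifs with h <;> simp [h]
  cases a <;> simp only [simStep, hq, cond_false, cond_true, Option.elim_some, target] <;> rfl

theorem foldl_simStep_table (T : Transducer) :
    ∀ (p : List Bool) (q : Fin T.n) (out : List Bool),
    p.foldl (simStep T.table) (q.val, out) = ((T.run q p).1.val, out ++ (T.run q p).2)
  | [], _, _ => by simp [run]
  | a :: p, q, out => by simp [run, simStep_table, foldl_simStep_table T p]

theorem simulate_table (T : Transducer) (p : List Bool) : simulate T.table p = T.output p := by
  simpa [simulate, output, start] using congrArg Prod.snd (foldl_simStep_table T p T.start [])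

end Transducer

theorem idTransducer_run :
    ∀ (q : Fin idTransducer.n) (p : List Bool), idTransducer.run q p = (q, p)
  | _, [] => rfl
  | q, a :: p => by
    show ((idTransducer.run q p).1, [a] ++ (idTransducer.run q p).2) = (q, a :: p)
    rw [idTransducer_run q p]
    rfl

theorem idTransducer_output (p : List Bool) : idTransducer.output p = p := by
  simp [Transducer.output, idTransducer_run]

namespace CompEncoding

variable (S : CompEncoding)

noncomputable def idCode : List Bool := (S.decode_surj idTransducer).choose

theorem decode_idCode : S.decode S.idCode = some idTransducer :=
  (S.decode_surj idTransducer).choose_spec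

noncomputable def complexityBound (x : List Bool) : ℕ := S.idCode.length + x.length

theorem complexityBound_mem_sizes (x : List Bool) : S.complexityBound x ∈ S.sizes x :=
  ⟨S.idCode, idTransducer, x, S.decode_idCode, idTransducer_output x, rfl⟩

theorem C_mem_sizes (x : List Bool) : S.C x ∈ S.sizes x :=
  Nat.sInf_mem ⟨_, S.complexityBound_mem_sizes x⟩

theorem C_le_of_mem_sizes {x : List Bool} {c : ℕ} (h : c ∈ S.sizes x) : S.C x ≤ c :=
  Nat.sInf_le h

noncomputable def shortDescriptions (x : List Bool) : List (ℕ × ℕ) :=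
  ((wordsUpTo (S.complexityBound x)).product (wordsUpTo (S.complexityBound x))).filterMap
    fun d => (S.decode d.1).bind fun T =>
      if T.output d.2 = x then some (d.1.length + d.2.length, T.size) else none

theorem mem_shortDescriptions {x : List Bool} {d : ℕ × ℕ} :
    d ∈ S.shortDescriptions x ↔ ∃ σ T p, σ.length ≤ S.complexityBound x ∧
      p.length ≤ S.complexityBound x ∧ S.decode σ = some T ∧ T.output p = x ∧
      d = (σ.length + p.length, T.size) := by
  simp only [shortDescriptions, List.mem_filterMap, Prod.exists, List.pair_mem_product,
    mem_wordsUpTo, Option.bind_eq_some_iff]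
  constructor
  · rintro ⟨σ, p, ⟨hσ, hp⟩, T, hT, hd⟩
    split_ifs at hd with hout
    exact ⟨σ, T, p, hσ, hp, hT, hout, (Option.some_inj.mp hd).symm⟩
  · rintro ⟨σ, T, p, hσ, hp, hT, hout, rfl⟩
    exact ⟨σ, p, ⟨hσ, hp⟩, T, hT, by simp [hout]⟩

theorem mem_Lle_iff (m : ℕ) (x : List Bool) :
    x ∈ S.Lle m ↔
      ∃ d ∈ S.shortDescriptions x, d.2 ≤ m ∧ ∀ d' ∈ S.shortDescriptions x, d.1 ≤ d'.1 := by
  have cost_mem : ∀ d ∈ S.shortDescriptions x, d.1 ∈ S.sizes x := by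
    intro d hd
    obtain ⟨σ, T, p, -, -, hT, hout, rfl⟩ := S.mem_shortDescriptions.mp hd
    exact ⟨σ, T, p, hT, hout, rfl⟩
  have minimal_mem : ∀ σ T p, S.decode σ = some T → T.output p = x →
      σ.length + p.length = S.C x → (σ.length + p.length, T.size) ∈ S.shortDescriptions x := by
    intro σ T p hT hout hC
    have := S.C_le_of_mem_sizes (S.complexityBound_mem_sizes x)
    exact S.mem_shortDescriptions.mpr ⟨σ, T, p, by omega, by omega, hT, hout, rfl⟩
  constructor
  · rintro ⟨σ, T, p, hT, hout, hC, hm⟩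
    exact ⟨_, minimal_mem σ T p hT hout hC, hm,
      fun d' hd' => hC ▸ S.C_le_of_mem_sizes (cost_mem d' hd')⟩
  · rintro ⟨d, hd, hm, hmin⟩
    obtain ⟨σ, T, p, -, -, hT, hout, rfl⟩ := S.mem_shortDescriptions.mp hd
    obtain ⟨σ₀, T₀, p₀, hT₀, hout₀, hC₀⟩ := S.C_mem_sizes x
    refine ⟨σ, T, p, hT, hout, le_antisymm ?_ (S.C_le_of_mem_sizes ⟨σ, T, p, hT, hout, rfl⟩), hm⟩
    exact hC₀ ▸ hmin _ (minimal_mem σ₀ T₀ p₀ hT₀ hout₀ hC₀.symm)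

theorem computable_decode_table : Computable fun σ => (S.decode σ).map Transducer.table :=
  (Computable.option_map S.decode_comp
    (StdEnc.primrec_parse.to_comp.comp Computable.snd).to₂).of_eq
    fun σ => by cases S.decode σ <;> simp [Transducer.parse_stdEnc]

theorem computable_shortDescriptions : Computable S.shortDescriptions := by
  have words : Primrec fun x => wordsUpTo (S.complexityBound x) :=
    primrec_wordsUpTo.comp (Primrec.nat_add.comp (Primrec.const _) Primrec.list_length)
  have candidates : Primrec fun x =>
      (wordsUpTo (S.complexityBound x)).product (wordsUpTo (S.complexityBound x)) :=
    Primrec.list_flatMap words (Primrec.list_map (words.comp Primrec.fst)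
      ((Primrec.snd.comp Primrec.fst).pair Primrec.snd).to₂).to₂
  have describe : Primrec₂ fun (xd : List Bool × List Bool × List Bool) (r : StdEnc.Table) =>
      if StdEnc.simulate r xd.2.2 = xd.1 then
        some (xd.2.1.length + xd.2.2.length, r.length) else none :=
    (Primrec.ite (Primrec.eq.comp (StdEnc.primrec_simulate.comp Primrec.snd
        (Primrec.snd.comp (Primrec.snd.comp Primrec.fst))) (Primrec.fst.comp Primrec.fst))
      (Primrec.option_some.comp ((Primrec.nat_add.comp
        (Primrec.list_length.comp (Primrec.fst.comp (Primrec.snd.comp Primrec.fst)))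
        (Primrec.list_length.comp (Primrec.snd.comp (Primrec.snd.comp Primrec.fst)))).pair
        (Primrec.list_length.comp Primrec.snd)))
      (Primrec.const none)).to₂
  have hits := Computable.list_map candidates.to_comp (Computable.option_bind
    (S.computable_decode_table.comp (Computable.fst.comp Computable.snd)) describe.to_comp).to₂
  refine ((Primrec.listFilterMap Primrec.id Primrec.snd.to₂).to_comp.comp hits).of_eq fun x => ?_
  simp only [shortDescriptions, id_eq, List.filterMap_map]
  refine List.filterMap_congr fun d _ => ?_
  simp only [Function.comp_apply]
  cases S.decode d.1 <;> simp [Transducer.simulate_table, Transducer.length_table]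

end CompEncoding

theorem primrecPred_exists_fst_minimal_snd_le (m : ℕ) :
    PrimrecPred fun D : List (ℕ × ℕ) => ∃ d ∈ D, d.2 ≤ m ∧ ∀ d' ∈ D, d.1 ≤ d'.1 := by
  have minimal : PrimrecRel fun (D : List (ℕ × ℕ)) (d : ℕ × ℕ) => ∀ d' ∈ D, d.1 ≤ d'.1 :=
    PrimrecRel.forall_mem_list
      (Primrec.nat_le.comp (Primrec.fst.comp Primrec.snd) (Primrec.fst.comp Primrec.fst))
  have good : PrimrecRel fun (d : ℕ × ℕ) (D : List (ℕ × ℕ)) =>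
      d.2 ≤ m ∧ ∀ d' ∈ D, d.1 ≤ d'.1 :=
    PrimrecPred.and (Primrec.nat_le.comp (Primrec.snd.comp Primrec.fst) (Primrec.const m))
      (minimal.comp Primrec.snd Primrec.fst)
  exact good.exists_mem_list.comp Primrec.id Primrec.id

theorem stmt2_general (S : CompEncoding) (m : ℕ) :
    ComputablePred (· ∈ S.Lle m) := by
  obtain ⟨_, h⟩ := primrecPred_exists_fst_minimal_snd_le m
  rw [ComputablePred.computable_iff]
  exact ⟨_, h.to_comp.comp S.computable_shortDescriptions,
    funext fun x => propext <| by simpa using S.mem_Lle_iff m x⟩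

theorem stmt2 (S : CompEncoding) (m : ℕ) (hm : 1 ≤ m) :
    ComputablePred (· ∈ S.Lle m) :=
  stmt2_general S m
end

section
/- For every n, m ≥ 1, the 2n-state transducer T₁ on input p₁ = (0^m 1)^{2n−1} 0^m 1^m outputs exactly x_n(m), i.e. T₁(p₁) = x_n(m). -/
/-!
Each block `0^m 1` read in state `j < 2n` emits `(u_j^m)^m = u_j^{m²}` and moves to state `j + 1`;
after `2n - 1` blocks the transducer sits in its last state `2n`, where `0^m` emits `u_{2n}^{m²}`
and `1^m` emits `u_{2n+1}^{m²}`.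
-/

theorem List.flatten_replicate_flatten_replicate {α : Type*} (a b : ℕ) (l : List α) :
    (List.replicate a (List.replicate b l).flatten).flatten = (List.replicate (a * b) l).flatten := by
  induction a with
  | zero => simp
  | succ a ih =>
    rw [List.replicate_succ, List.flatten_cons, ih, Nat.succ_mul, Nat.add_comm, List.replicate_add,
      List.flatten_append]

namespace Transducer

variable (T : Transducer)

theorem run_append (q : Fin T.n) (x y : List Bool) :
    T.run q (x ++ y) =
      ((T.run (T.run q x).1 y).1, (T.run q x).2 ++ (T.run (T.run q x).1 y).2) := by
  induction x generalizing q with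
  | nil => rfl
  | cons a x ih => simp [run, ih]

theorem run_replicate_of_delta_eq {q : Fin T.n} {a : Bool} {w : List Bool}
    (h : T.delta q a = (q, w)) (k : ℕ) :
    T.run q (List.replicate k a) = (q, (List.replicate k w).flatten) := by
  induction k with
  | zero => rfl
  | succ k ih => simp [List.replicate_succ, run, h, ih]

theorem run_flatten_replicate (s : ℕ → Fin T.n) (w : ℕ → List Bool) (b : List Bool) (k : ℕ)
    (h : ∀ i < k, T.run (s i) b = (s (i + 1), w i)) :
    T.run (s 0) (List.replicate k b).flatten = (s k, (List.range k).flatMap w) := by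
  induction k with
  | zero => rfl
  | succ k ih =>
    rw [List.replicate_succ', List.flatten_append, List.flatten_singleton, run_append,
      ih fun i hi => h i (by omega), h k (by omega), List.range_succ, List.flatMap_append]
    simp

end Transducer

section T1

variable {n : ℕ} (m : ℕ) (hn : 0 < n)

theorem T1_delta_false (j : Fin (T1 n m hn).n) :
    (T1 n m hn).delta j false = (j, (List.replicate m (u n (j.val + 1))).flatten) := rfl

theorem T1_delta_true_of_lt (j : Fin (T1 n m hn).n) (h : j.val + 1 < 2 * n) :
    (T1 n m hn).delta j true = (⟨j.val + 1, h⟩, []) := by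
  simp [T1, h]

theorem T1_delta_true_of_last (j : Fin (T1 n m hn).n) (h : j.val = 2 * n - 1) :
    (T1 n m hn).delta j true = (j, (List.replicate m (u n (2 * n + 1))).flatten) := by
  simp [T1, show ¬ j.val + 1 < 2 * n by omega]

theorem T1_run_block (j : Fin (T1 n m hn).n) (h : j.val + 1 < 2 * n) :
    (T1 n m hn).run j (List.replicate m false ++ [true]) =
      (⟨j.val + 1, h⟩, (List.replicate (m ^ 2) (u n (j.val + 1))).flatten) := by
  rw [Transducer.run_append, Transducer.run_replicate_of_delta_eq _ (T1_delta_false m hn j)]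
  simp [Transducer.run, T1_delta_true_of_lt m hn j h, List.flatten_replicate_flatten_replicate, sq]

theorem T1_run_blocks (k : ℕ) (hk : k < 2 * n) :
    (T1 n m hn).run (T1 n m hn).start (List.replicate k (List.replicate m false ++ [true])).flatten =
      (⟨k, hk⟩, (List.range k).flatMap fun i => (List.replicate (m ^ 2) (u n (i + 1))).flatten) := by
  -- clamped so that every `i` names a state; only `i ≤ k` matters
  let state (i : ℕ) : Fin (T1 n m hn).n := ⟨min i k, by simp [T1]; omega⟩
  have state_val (i : ℕ) (hi : i ≤ k) : (state i).val = i := by simp [state]; omega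
  have h := (T1 n m hn).run_flatten_replicate state
    (fun i => (List.replicate (m ^ 2) (u n (i + 1))).flatten) _ k fun i hi => by
      rw [T1_run_block m hn (state i) (by rw [state_val i hi.le]; omega)]
      refine Prod.ext (Fin.ext ?_) ?_ <;> simp only [state_val i hi.le, state_val (i + 1) hi]
  rwa [show state k = ⟨k, hk⟩ from Fin.ext (state_val k le_rfl)] at h

end T1

theorem stmt5_general (n m : ℕ) (hn : 0 < n) :
    (T1 n m hn).output (p1 n m) = xnm n m := by
  set last : Fin (T1 n m hn).n := ⟨2 * n - 1, by simp [T1]; omega⟩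
  have blocks := T1_run_blocks m hn (2 * n - 1) (by omega)
  have zeros := (T1 n m hn).run_replicate_of_delta_eq (T1_delta_false m hn last) m
  have ones := (T1 n m hn).run_replicate_of_delta_eq (T1_delta_true_of_last m hn last rfl) m
  have hrange : List.range (2 * n + 1) = List.range (2 * n - 1) ++ [2 * n - 1, 2 * n] := by
    rw [show 2 * n + 1 = 2 * n - 1 + 1 + 1 by omega, List.range_succ, List.range_succ]
    simp [show 2 * n - 1 + 1 = 2 * n by omega]
  rw [Transducer.output, p1, List.append_assoc, Transducer.run_append, blocks,
    Transducer.run_append, zeros, ones, xnm, hrange, List.flatMap_append]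
  simp [last, List.flatten_replicate_flatten_replicate, sq, show 2 * n - 1 + 1 = 2 * n by omega]

theorem stmt5 (n m : ℕ) (hn : 0 < n) (hm : 1 ≤ m) :
    (T1 n m hn).output (p1 n m) = xnm n m :=
  stmt5_general n m hn
end

section
/- For every n, m ≥ 1, every substring of x_n(m) of length at least 4n + 5 contains some u_i (1 ≤ i ≤ 2n+1) as a substring. Equivalently, any string that occurs as a substring of x_n(m) and contains none of the u_i as a substring has length at most 4n + 4. -/
/-! `x_n(m)` is the concatenation of the blocks `u_i`, all of length `L = 2n+3`. A window of
length `2L - 1 = 4n + 5` starting at position `k` contains the whole block that starts at the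
first multiple of `L` that is `≥ k`. -/

namespace List

variable {α : Type*}

theorem sum_take_map_length_of_forall_length_eq {L : ℕ} {bs : List (List α)}
    (hlen : ∀ b ∈ bs, b.length = L) (j : ℕ) :
    ((bs.map length).take j).sum = min j bs.length * L := by
  rw [map_congr_left hlen, map_const', take_replicate, sum_replicate, smul_eq_mul]

theorem length_flatten_of_forall_length_eq {L : ℕ} {bs : List (List α)}
    (hlen : ∀ b ∈ bs, b.length = L) : bs.flatten.length = bs.length * L := by
  rw [length_flatten, map_congr_left hlen, map_const', sum_replicate, smul_eq_mul]

theorem exists_mem_infix_of_infix_flatten {L : ℕ} {bs : List (List α)} {w : List α}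
    (hL : 0 < L) (hlen : ∀ b ∈ bs, b.length = L) (hw : w <:+: bs.flatten)
    (hwL : 2 * L ≤ w.length + 1) : ∃ b ∈ bs, b <:+: w := by
  obtain ⟨s, t, hst⟩ := hw
  obtain ⟨d, j, hd, hdw⟩ : ∃ d j, j * L = s.length + d ∧ d + L ≤ w.length := by
    have := Nat.div_mul_le_self (s.length + L - 1) L
    have := Nat.lt_div_mul_add (a := s.length + L - 1) hL
    exact ⟨_, (s.length + L - 1) / L, (Nat.add_sub_of_le (by omega)).symm, by omega⟩
  have hj : j < bs.length := by
    have := congrArg length hst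
    rw [length_flatten_of_forall_length_eq hlen] at this
    simp only [length_append] at this
    by_contra!
    have := Nat.mul_le_mul_right L this
    omega
  have hbj : bs.flatten.drop (j * L) = bs[j] ++ (bs.drop (j + 1)).flatten := by
    have := drop_sum_flatten bs j
    rw [sum_take_map_length_of_forall_length_eq hlen, min_eq_left hj.le] at this
    rw [this, drop_eq_getElem_cons hj, flatten_cons]
  have hwd : bs.flatten.drop (j * L) = w.drop d ++ t := by
    rw [← hst, hd, append_assoc, drop_append, drop_eq_nil_of_le (by omega), nil_append,
      Nat.add_sub_cancel_left, drop_append_of_le_length (by omega)]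
  have hpre : bs[j] <+: w.drop d :=
    prefix_of_prefix_length_le (hbj ▸ prefix_append _ _) (hwd ▸ prefix_append _ _)
      (by rw [hlen _ (getElem_mem hj), length_drop]; omega)
  exact ⟨bs[j], getElem_mem hj, hpre.isInfix.trans (drop_suffix _ _).isInfix⟩

end List

theorem length_u {n i : ℕ} (hi : i ≤ 2 * n + 2) : (u n i).length = 2 * n + 3 := by
  simp only [u, List.length_cons, List.length_append, List.length_replicate]
  omega

def xnmBlocks (n m : ℕ) : List (List Bool) :=
  (List.range (2 * n + 1)).flatMap fun i => List.replicate (m ^ 2) (u n (i + 1))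

theorem flatten_xnmBlocks (n m : ℕ) : (xnmBlocks n m).flatten = xnm n m := by
  simp only [xnmBlocks, xnm, List.flatMap_def, List.flatten_flatten, List.map_map]
  rfl

theorem exists_eq_u_of_mem_xnmBlocks {n m : ℕ} {b : List Bool} (hb : b ∈ xnmBlocks n m) :
    ∃ i, 1 ≤ i ∧ i ≤ 2 * n + 1 ∧ b = u n i := by
  obtain ⟨i, hi, hb⟩ := List.mem_flatMap.1 hb
  exact ⟨i + 1, by omega, by rw [List.mem_range] at hi; omega, List.eq_of_mem_replicate hb⟩

theorem exists_u_infix_of_infix_xnm {n m : ℕ} {w : List Bool} (hw : w <:+: xnm n m)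
    (hlen : 4 * n + 5 ≤ w.length) : ∃ i, 1 ≤ i ∧ i ≤ 2 * n + 1 ∧ u n i <:+: w := by
  rw [← flatten_xnmBlocks] at hw
  have hblock : ∀ b ∈ xnmBlocks n m, b.length = 2 * n + 3 := fun b hb => by
    obtain ⟨i, -, hi, rfl⟩ := exists_eq_u_of_mem_xnmBlocks hb
    exact length_u (by omega)
  obtain ⟨b, hb, hbw⟩ := List.exists_mem_infix_of_infix_flatten (by omega) hblock hw (by omega)
  obtain ⟨i, hi₁, hi₂, rfl⟩ := exists_eq_u_of_mem_xnmBlocks hb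
  exact ⟨i, hi₁, hi₂, hbw⟩

theorem stmt8_general (n m : ℕ) :
    (∀ w : List Bool, w <:+: xnm n m → 4 * n + 5 ≤ w.length →
      ∃ i, 1 ≤ i ∧ i ≤ 2 * n + 1 ∧ u n i <:+: w) ∧
    (∀ w : List Bool, w <:+: xnm n m →
      (∀ i, 1 ≤ i → i ≤ 2 * n + 1 → ¬ u n i <:+: w) → w.length ≤ 4 * n + 4) := by
  refine ⟨fun w hw hlen => exists_u_infix_of_infix_xnm hw hlen, fun w hw hfree => ?_⟩
  by_contra! hlen
  obtain ⟨i, hi₁, hi₂, hiw⟩ := exists_u_infix_of_infix_xnm hw hlen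
  exact hfree i hi₁ hi₂ hiw

theorem stmt8 (n m : ℕ) (hn : 1 ≤ n) (hm : 1 ≤ m) :
    (∀ w : List Bool, w <:+: xnm n m → 4 * n + 5 ≤ w.length →
      ∃ i, 1 ≤ i ∧ i ≤ 2 * n + 1 ∧ u n i <:+: w) ∧
    (∀ w : List Bool, w <:+: xnm n m →
      (∀ i, 1 ≤ i → i ≤ 2 * n + 1 → ¬ u n i <:+: w) → w.length ≤ 4 * n + 4) :=
  stmt8_general n m
end

section
/- There exists a computable encoding S₁ of all transducers such that L^{S₁}_{≤n−1} is strictly included in L^{S₁}_{≤n} for every n ≥ 1. -/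
/-!
The encoding `S₁` gives the `n`-state transducer `F_n` of `famTable n`, all of whose transitions
output `1 0ⁿ`, the short code `1 ⬝ bits n`; with input `0` it describes `1 0ⁿ` in `size n + 2` bits.
Every other transducer gets the unary code `0 1ᵉ`, where `e` is the `Encodable` code of its
transition table. As `e` bounds the output of each transition, producing `1 0ⁿ` from an input `p`
forces `n < |p| ⬝ e`, hence a description of length at least `size n + 3`. So all minimal
descriptions of `1 0ⁿ` use `F_n`, and `1 0ⁿ` lies in `L_{≤ n} \ L_{≤ n-1}`.
-/

namespace Transducer

def transition (T : Transducer) (q : Fin T.n) (b : Bool) : ℕ × List Bool :=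
  ((T.delta q b).1.val, (T.delta q b).2)

theorem ext_transition {T₁ T₂ : Transducer} (hn : T₁.n = T₂.n)
    (h : ∀ (i : ℕ) (h₁ : i < T₁.n) (h₂ : i < T₂.n) (b : Bool),
      T₁.transition ⟨i, h₁⟩ b = T₂.transition ⟨i, h₂⟩ b) : T₁ = T₂ := by
  obtain ⟨n, _, δ₁⟩ := T₁
  obtain ⟨_, _, δ₂⟩ := T₂
  obtain rfl : n = _ := hn
  congr
  funext q b
  obtain ⟨h₁, h₂⟩ := Prod.ext_iff.mp (h q q.isLt q.isLt b)
  exact Prod.ext (Fin.ext h₁) h₂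

theorem length_run_le (T : Transducer) {c : ℕ} (h : ∀ q b, (T.delta q b).2.length ≤ c) :
    ∀ (q : Fin T.n) (p : List Bool), (T.run q p).2.length ≤ p.length * c
  | _, [] => by simp [run]
  | q, a :: p => by
    have := T.length_run_le h (T.delta q a).1 p
    simp only [run, List.length_append, List.length_cons, Nat.succ_mul]
    linarith [h q a]

theorem length_output_le (T : Transducer) {c : ℕ} (h : ∀ q b, (T.delta q b).2.length ≤ c)
    (p : List Bool) : (T.output p).length ≤ p.length * c :=
  T.length_run_le h _ p

theorem run_snd_of_delta_snd {T : Transducer} {v : List Bool} (h : ∀ q b, (T.delta q b).2 = v) :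
    ∀ (q : Fin T.n) (p : List Bool), (T.run q p).2 = (List.replicate p.length v).flatten
  | _, [] => rfl
  | q, a :: p => by simp [run, h, run_snd_of_delta_snd h _ p, List.replicate_succ]

theorem output_of_delta_snd {T : Transducer} {v : List Bool} (h : ∀ q b, (T.delta q b).2 = v)
    (p : List Bool) : T.output p = (List.replicate p.length v).flatten :=
  run_snd_of_delta_snd h _ p

end Transducer

def markedUnary (n : ℕ) : List Bool := true :: List.replicate n false

theorem eq_of_flatten_replicate_markedUnary {k m n : ℕ}
    (h : (List.replicate k (markedUnary m)).flatten = markedUnary n) : k = 1 ∧ m = n := by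
  have hk : k = 1 := by
    simpa [markedUnary, List.count_flatten, List.count_replicate] using congrArg (List.count true) h
  subst hk
  simpa [markedUnary] using h

def ofBits (l : List Bool) : ℕ := Nat.ofDigits 2 (l.map Bool.toNat)

theorem ofBits_bits (n : ℕ) : ofBits n.bits = n := by
  have h := Nat.ofDigits_digits 2 n
  rwa [Nat.digits_two_eq_bits] at h

theorem ofBits_eq_foldr (l : List Bool) : ofBits l = l.foldr (fun b k => b.toNat + 2 * k) 0 := by
  induction l with
  | nil => rfl
  | cons b l ih => simp [ofBits, Nat.ofDigits_cons, ← ih]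

theorem Nat.bits_eq_cons {n : ℕ} (hn : n ≠ 0) : n.bits = decide (n % 2 = 1) :: (n / 2).bits := by
  rcases Nat.even_or_odd' n with ⟨k, rfl | rfl⟩
  · rw [Nat.bit0_bits k (by omega)]
    simp
  · rw [Nat.bit1_bits]
    simp [Nat.mul_add_div]

theorem Nat.size_add_two_le_of_lt_mul {n a b : ℕ} (h : n < a * b) : n.size + 2 ≤ a + b := by
  obtain ⟨ha, hb⟩ : 1 ≤ a ∧ 1 ≤ b := by
    constructor <;> by_contra! h0 <;> simp_all
  have hpow (k : ℕ) : k ≤ 2 ^ (k - 1) := by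
    have := (k - 1).lt_two_pow_self
    omega
  have : n < 2 ^ (a + b - 2) :=
    calc n < a * b := h
      _ ≤ 2 ^ (a - 1) * 2 ^ (b - 1) := Nat.mul_le_mul (hpow a) (hpow b)
      _ = 2 ^ (a + b - 2) := by rw [← pow_add]; congr 1; omega
  have := Nat.size_le.mpr this
  omega

theorem Encodable.encode_le_encode_of_mem {α : Type*} [Encodable α] {a : α} {l : List α}
    (h : a ∈ l) : encode a ≤ encode l := by
  induction l with
  | nil => simp at h
  | cons b l ih =>
    rw [encode_list_cons]
    rcases List.mem_cons.mp h with rfl | h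
    · exact (Nat.left_le_pair _ _).trans (Nat.le_succ _)
    · exact (ih h).trans ((Nat.right_le_pair _ _).trans (Nat.le_succ _))

/-- Entry `2 q + b` of a table `(n, l)` holds the target and output of the transition from state
`q` on input `b`. Missing entries and out-of-range targets are repaired, so every table describes a
transducer with `max n 1` states, and `normalize` picks the canonical table of each transducer.
Decoding is computed on tables because `Transducer` carries no `Primcodable` structure. -/
abbrev TransitionTable : Type := ℕ × List (ℕ × List Bool)

namespace TransitionTable

variable (d : TransitionTable)

def numStates : ℕ := max d.1 1

theorem numStates_pos : 0 < d.numStates := by simp [numStates]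

def entry (i : ℕ) : ℕ × List Bool :=
  ((d.2.getD i (0, [])).1 % d.numStates, (d.2.getD i (0, [])).2)

def toTransducer : Transducer where
  n := d.numStates
  npos := d.numStates_pos
  delta j b :=
    (⟨(d.entry (2 * j + b.toNat)).1, Nat.mod_lt _ d.numStates_pos⟩, (d.entry (2 * j + b.toNat)).2)

theorem transition_toTransducer (j : Fin d.numStates) (b : Bool) :
    d.toTransducer.transition j b = d.entry (2 * j + b.toNat) := rfl

def normalize : TransitionTable := (d.numStates, (List.range (2 * d.numStates)).map d.entry)

theorem length_entry_le_encode (i : ℕ) : (d.entry i).2.length ≤ Encodable.encode d := by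
  rcases lt_or_ge i d.2.length with hi | hi
  · calc (d.entry i).2.length = d.2[i].2.length := by simp [entry, List.getElem?_eq_getElem hi]
      _ ≤ Encodable.encode d.2[i].2 := Encodable.length_le_encode _
      _ ≤ Encodable.encode d.2[i] := Nat.right_le_pair _ _
      _ ≤ Encodable.encode d.2 := Encodable.encode_le_encode_of_mem (List.getElem_mem hi)
      _ ≤ Encodable.encode d := Nat.right_le_pair _ _
  · simp [entry, List.getElem?_eq_none hi]

end TransitionTable

def Transducer.toTable (T : Transducer) : TransitionTable :=
  (T.n, (List.finRange (2 * T.n)).map fun i =>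
    T.transition ⟨i.val / 2, Nat.div_lt_of_lt_mul i.isLt⟩ (decide (i.val % 2 = 1)))

namespace TransitionTable

theorem entry_toTable (T : Transducer) (q : Fin T.n) (b : Bool) :
    T.toTable.entry (2 * q + b.toNat) = T.transition q b := by
  have hi : 2 * q + b.toNat < 2 * T.n := by have := b.toNat_le; omega
  have hq : (2 * q + b.toNat) / 2 = q := by have := b.toNat_le; omega
  have hb : decide (b.toNat % 2 = 1) = b := by cases b <;> rfl
  have hn : max T.n 1 = T.n := max_eq_left T.npos
  simp [entry, numStates, Transducer.toTable, hi, hq, hb, hn, Transducer.transition, Nat.mod_eq_of_lt]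

theorem toTransducer_toTable (T : Transducer) : T.toTable.toTransducer = T :=
  Transducer.ext_transition (max_eq_left T.npos) fun i _ h b => entry_toTable T ⟨i, h⟩ b

theorem toTable_toTransducer (d : TransitionTable) : d.toTransducer.toTable = d.normalize := by
  refine Prod.ext rfl (List.ext_getElem (by simp [normalize, Transducer.toTable, toTransducer]) ?_)
  intro i _ _
  have hbit : (decide (i % 2 = 1)).toNat = i % 2 := by
    rcases Nat.mod_two_eq_zero_or_one i with h | h <;> simp [h]
  have hi : 2 * (i / 2) + (decide (i % 2 = 1)).toNat = i := by omega
  simpa [normalize, Transducer.toTable] using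
    (transition_toTransducer d _ _).trans (congrArg d.entry hi)

def encEntry (j : ℕ) (t : ℕ × List Bool) : List Bool :=
  (if t.1 = j then [] else dagger (binRep (t.1 + 1))) ++ diamond t.2

def stdCode (d : TransitionTable) : List Bool :=
  (List.range d.numStates).flatMap fun j =>
    encEntry j (d.entry (2 * j)) ++ encEntry j (d.entry (2 * j + 1))

theorem encTransition_eq_encEntry {n : ℕ} (j : Fin n) (t : Fin n × List Bool) :
    encTransition j t = encEntry j (t.1, t.2) := by
  simp [encTransition, encEntry, Fin.val_inj]

theorem stdEnc_toTransducer (d : TransitionTable) : stdEnc d.toTransducer = d.stdCode := by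
  rw [stdEnc, stdCode, ← List.map_coe_finRange_eq_range, List.flatMap_map]
  congr 1
  funext j
  simp only [encTransition_eq_encEntry]
  rfl

end TransitionTable

def famTable (m : ℕ) : TransitionTable :=
  (max m 1, List.replicate (2 * max m 1) (0, markedUnary m))

theorem eq_of_famTable_eq {m₁ m₂ : ℕ} (h₁ : 0 < m₁) (h₂ : 0 < m₂)
    (h : famTable m₁ = famTable m₂) : m₁ = m₂ := by
  have := congrArg Prod.fst h
  simp only [famTable] at this
  omega

namespace TransitionTable

theorem entry_famTable {m i : ℕ} (hi : i < 2 * max m 1) :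
    (famTable m).entry i = (0, markedUnary m) := by
  simp [entry, famTable, hi]

theorem normalize_famTable (m : ℕ) : (famTable m).normalize = famTable m := by
  refine Prod.ext (by simp [normalize, numStates, famTable]) (List.eq_replicate_iff.mpr ⟨?_, ?_⟩)
  · simp [normalize, numStates, famTable]
  · simp only [normalize, List.mem_map, List.mem_range, forall_exists_index, and_imp]
    rintro _ i hi rfl
    exact entry_famTable (by simpa [numStates, famTable] using hi)

theorem output_famTable (m : ℕ) (p : List Bool) :
    (famTable m).toTransducer.output p = (List.replicate p.length (markedUnary m)).flatten := by
  refine Transducer.output_of_delta_snd (fun q b => ?_) p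
  have hq : (q : ℕ) < max (max m 1) 1 := q.isLt
  have := b.toNat_le
  exact congrArg Prod.snd (entry_famTable (by omega))

theorem size_famTable {m : ℕ} (hm : 0 < m) : (famTable m).toTransducer.size = m := by
  show max (max m 1) 1 = m
  omega

end TransitionTable

open TransitionTable

def decodeTable : List Bool → Option TransitionTable
  | [] => none
  | true :: τ => if 0 < ofBits τ ∧ (ofBits τ).bits = τ then some (famTable (ofBits τ)) else none
  | false :: τ =>
    if ∀ b ∈ τ, b = true then
      (Encodable.decode₂ TransitionTable τ.length).bind fun d =>
        if d.normalize = d ∧ famTable d.1 ≠ d then some d else none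
    else none

theorem decodeTable_bits {m : ℕ} (hm : 0 < m) :
    decodeTable (true :: m.bits) = some (famTable m) := by
  simp [decodeTable, ofBits_bits, hm]

theorem decodeTable_unary {d : TransitionTable} (hd : d.normalize = d) (hne : famTable d.1 ≠ d) :
    decodeTable (false :: List.replicate (Encodable.encode d) true) = some d := by
  simp [decodeTable, List.mem_replicate, hd, hne]

theorem decodeTable_eq_some {σ : List Bool} {d : TransitionTable} (h : decodeTable σ = some d) :
    (∃ m, 0 < m ∧ σ = true :: m.bits ∧ d = famTable m) ∨
      (d.normalize = d ∧ famTable d.1 ≠ d ∧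
        σ = false :: List.replicate (Encodable.encode d) true) := by
  match σ with
  | [] => simp [decodeTable] at h
  | true :: τ =>
    simp only [decodeTable, Option.ite_none_right_eq_some, Option.some.injEq] at h
    exact .inl ⟨_, h.1.1, by rw [h.1.2], h.2.symm⟩
  | false :: τ =>
    simp only [decodeTable, Option.ite_none_right_eq_some, Option.bind_eq_some_iff,
      Option.some.injEq] at h
    obtain ⟨hτ, d', hd', ⟨hnorm, hne⟩, rfl⟩ := h
    rw [← Option.mem_def, Encodable.mem_decode₂] at hd'
    exact .inr ⟨hnorm, hne, by rw [List.eq_replicate_iff.mpr ⟨hd'.symm, hτ⟩]⟩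

theorem normalize_of_decodeTable {σ : List Bool} {d : TransitionTable}
    (h : decodeTable σ = some d) : d.normalize = d := by
  rcases decodeTable_eq_some h with ⟨m, -, -, rfl⟩ | ⟨hd, -⟩
  · exact normalize_famTable m
  · exact hd

theorem eq_of_decodeTable_eq {σ₁ σ₂ : List Bool} {d : TransitionTable}
    (h₁ : decodeTable σ₁ = some d) (h₂ : decodeTable σ₂ = some d) : σ₁ = σ₂ := by
  have hfam {m} (hm : 0 < m) (hne : famTable d.1 ≠ d) (hd : d = famTable m) : False := by
    subst hd
    exact hne (congrArg famTable (max_eq_left hm))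
  rcases decodeTable_eq_some h₁ with ⟨m₁, hm₁, rfl, hd₁⟩ | ⟨-, hne₁, rfl⟩ <;>
    rcases decodeTable_eq_some h₂ with ⟨m₂, hm₂, rfl, hd₂⟩ | ⟨-, hne₂, rfl⟩
  · rw [eq_of_famTable_eq hm₁ hm₂ (hd₁.symm.trans hd₂)]
  · exact (hfam hm₁ hne₂ hd₁).elim
  · exact (hfam hm₂ hne₁ hd₂).elim
  · rfl

theorem exists_decodeTable_eq_toTable (T : Transducer) :
    ∃ σ, decodeTable σ = some T.toTable := by
  have hnorm : T.toTable.normalize = T.toTable := by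
    rw [← toTable_toTransducer, toTransducer_toTable]
  by_cases hfam : famTable T.n = T.toTable
  · exact ⟨true :: T.n.bits, hfam ▸ decodeTable_bits T.npos⟩
  · exact ⟨_, decodeTable_unary hnorm hfam⟩

theorem decodeTable_eq_toTable {σ : List Bool} {T : Transducer}
    (h : (decodeTable σ).map toTransducer = some T) : decodeTable σ = some T.toTable := by
  obtain ⟨d, hd, rfl⟩ := Option.map_eq_some_iff.mp h
  rw [hd, toTable_toTransducer, normalize_of_decodeTable hd]

theorem length_add_length_of_output_eq_markedUnary {σ p : List Bool} {d : TransitionTable} {n : ℕ}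
    (h : decodeTable σ = some d) (hout : d.toTransducer.output p = markedUnary n) :
    (d = famTable n ∧ σ.length + p.length = n.size + 2) ∨ n.size + 3 ≤ σ.length + p.length := by
  rcases decodeTable_eq_some h with ⟨m, -, rfl, rfl⟩ | ⟨-, -, rfl⟩
  · rw [output_famTable] at hout
    obtain ⟨hp, rfl⟩ := eq_of_flatten_replicate_markedUnary hout
    simp [hp, Nat.size_eq_bits_len]
  · have hlen := d.toTransducer.length_output_le (fun q b => d.length_entry_le_encode _) p
    rw [hout, markedUnary, List.length_cons, List.length_replicate] at hlen
    have := Nat.size_add_two_le_of_lt_mul (Nat.lt_of_succ_le hlen)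
    simp only [List.length_cons, List.length_replicate]
    omega

section Computability

open Primrec

theorem primrec_bits : Primrec Nat.bits := by
  let step : Unit → List (List Bool) → Option (List Bool) := fun _ l =>
    if l.length = 0 then some [] else l[l.length / 2]?.map (decide (l.length % 2 = 1) :: ·)
  have hstep : Primrec₂ step := by
    refine Primrec.ite (PrimrecRel.comp Primrec.eq (list_length.comp snd) (const 0)) (const _) ?_
    refine option_map (list_getElem?.comp snd (nat_div.comp (list_length.comp snd) (const 2))) ?_
    refine list_cons.comp₂ ?_ Primrec₂.right
    exact (PrimrecRel.comp Primrec.eq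
      (nat_mod.comp (list_length.comp (snd.comp fst)) (const 2)) (const 1)).decide
  have hrec : ∀ n, step () ((List.range n).map Nat.bits) = some n.bits := by
    intro n
    rcases Nat.eq_zero_or_pos n with rfl | hn
    · simp [step]
    · simp [step, hn.ne', List.getElem?_range (Nat.div_lt_self hn one_lt_two),
        Nat.bits_eq_cons hn.ne']
  exact (nat_strong_rec (fun _ n => n.bits) hstep fun _ => hrec).comp (const ()) Primrec.id

theorem primrec_ofBits : Primrec ofBits := by
  have h : Primrec₂ fun (_ : List Bool) (p : Bool × ℕ) => p.1.toNat + 2 * p.2 :=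
    nat_add.comp ((dom_bool Bool.toNat).comp (fst.comp snd))
      (nat_mul.comp (const 2) (snd.comp snd))
  exact (list_foldr Primrec.id (const 0) h).of_eq fun l => (ofBits_eq_foldr l).symm

theorem primrec_binRep : Primrec binRep :=
  list_reverse.comp primrec_bits

theorem dagger_eq_foldr (v : List Bool) :
    dagger v = v.foldr (fun a w => a :: if w = [] then [true] else false :: w) [] := by
  induction v with
  | nil => rfl
  | cons a v ih =>
    cases v with
    | nil => rfl
    | cons b v =>
      have : dagger (b :: v) ≠ [] := by cases v <;> simp [dagger]
      simp [dagger, ← ih, this]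

theorem primrec_dagger : Primrec dagger := by
  have h : Primrec₂ fun (_ : List Bool) (p : Bool × List Bool) =>
      p.1 :: if p.2 = [] then [true] else false :: p.2 :=
    list_cons.comp (fst.comp snd)
      (Primrec.ite (PrimrecRel.comp Primrec.eq (snd.comp snd) (const []))
        (const [true]) (list_cons.comp (const false) (snd.comp snd)))
  exact (list_foldr Primrec.id (const []) h).of_eq fun v => (dagger_eq_foldr v).symm

theorem primrec_diamond : Primrec diamond :=
  list_map (primrec_dagger.comp (list_cons.comp (const true) Primrec.id))
    ((dom_bool (!·)).comp snd)

theorem primrec_list_replicate {α : Type*} [Primcodable α] : Primrec₂ (@List.replicate α) :=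
  (list_map (list_range.comp fst) (snd.comp fst).to₂).of_eq fun p => by simp [List.map_const']

namespace TransitionTable

theorem primrec_numStates : Primrec numStates :=
  nat_max.comp fst (const 1)

theorem primrec_entry : Primrec₂ entry := by
  have hget : Primrec fun p : TransitionTable × ℕ => p.1.2.getD p.2 (0, []) :=
    (list_getD _).comp (snd.comp fst) snd
  exact Primrec.pair (nat_mod.comp (fst.comp hget) (primrec_numStates.comp fst)) (snd.comp hget)

theorem primrec_normalize : Primrec normalize :=
  Primrec.pair primrec_numStates
    (list_map (list_range.comp (nat_mul.comp (const 2) primrec_numStates)) primrec_entry)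

theorem primrec_encEntry : Primrec₂ encEntry := by
  refine list_append.comp (Primrec.ite (PrimrecRel.comp Primrec.eq (fst.comp snd) fst) (const [])
    ?_) (primrec_diamond.comp (snd.comp snd))
  exact primrec_dagger.comp (primrec_binRep.comp (succ.comp (fst.comp snd)))

theorem primrec_stdCode : Primrec stdCode := by
  refine list_flatMap (list_range.comp primrec_numStates) (list_append.comp ?_ ?_)
  · exact primrec_encEntry.comp snd (primrec_entry.comp fst (nat_mul.comp (const 2) snd))
  · exact primrec_encEntry.comp snd
      (primrec_entry.comp fst (succ.comp (nat_mul.comp (const 2) snd)))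

end TransitionTable

theorem primrec_famTable : Primrec famTable := by
  have hmax : Primrec fun m : ℕ => max m 1 := nat_max.comp Primrec.id (const 1)
  have hword : Primrec markedUnary :=
    list_cons.comp (const true) (primrec_list_replicate.comp Primrec.id (const false))
  exact Primrec.pair hmax (primrec_list_replicate.comp (nat_mul.comp (const 2) hmax)
    (Primrec.pair (const 0) hword))

theorem primrec_decodeTable : Primrec decodeTable := by
  have hfam : Primrec fun τ : List Bool =>
      if 0 < ofBits τ ∧ (ofBits τ).bits = τ then some (famTable (ofBits τ)) else none :=
    Primrec.ite (PrimrecPred.and (PrimrecRel.comp Primrec.nat_lt (const 0) primrec_ofBits)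
        (PrimrecRel.comp Primrec.eq (primrec_bits.comp primrec_ofBits) Primrec.id))
      (option_some.comp (primrec_famTable.comp primrec_ofBits)) (const none)
  have hcheck : Primrec₂ fun (_ : List Bool) (d : TransitionTable) =>
      if d.normalize = d ∧ famTable d.1 ≠ d then some d else none :=
    Primrec.ite (PrimrecPred.and (PrimrecRel.comp Primrec.eq (primrec_normalize.comp snd) snd)
        (PrimrecRel.comp Primrec.eq (primrec_famTable.comp (fst.comp snd)) snd).not)
      (option_some.comp snd) (const none)
  have hunary : Primrec fun τ : List Bool =>
      if ∀ b ∈ τ, b = true then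
        (Encodable.decode₂ TransitionTable τ.length).bind fun d =>
          if d.normalize = d ∧ famTable d.1 ≠ d then some d else none
      else none :=
    Primrec.ite (PrimrecPred.forall_mem_list (PrimrecRel.comp Primrec.eq Primrec.id (const true)))
      (option_bind (Primrec.decode₂.comp list_length) hcheck) (const none)
  refine (list_casesOn Primrec.id (const none) (Primrec.cond (fst.comp snd)
    (hfam.comp (snd.comp snd)) (hunary.comp (snd.comp snd))).to₂).of_eq ?_
  rintro (_ | ⟨_ | _, τ⟩) <;> rfl

end Computability

theorem CompEncoding.Lle_mono (S : CompEncoding) : Monotone S.Lle :=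
  fun _ _ hm _ ⟨σ, T, p, hdec, hout, hcost, hsize⟩ => ⟨σ, T, p, hdec, hout, hcost, hsize.trans hm⟩

def S₁ : CompEncoding where
  D := {σ | (decodeTable σ).isSome}
  dec := ⟨fun σ => inferInstanceAs (Decidable ((decodeTable σ).isSome = true)),
    (Primrec.option_isSome.comp primrec_decodeTable).to_comp.of_eq fun σ => by simp⟩
  decode σ := (decodeTable σ).map toTransducer
  decode_dom σ := by simp
  decode_inj σ₁ h₁ σ₂ _ h := by
    obtain ⟨d, hd⟩ := Option.isSome_iff_exists.mp h₁
    have hT : (decodeTable σ₁).map toTransducer = some d.toTransducer := by rw [hd]; rfl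
    exact eq_of_decodeTable_eq (decodeTable_eq_toTable hT) (decodeTable_eq_toTable (h ▸ hT))
  decode_surj T := by
    obtain ⟨σ, hσ⟩ := exists_decodeTable_eq_toTable T
    exact ⟨σ, by simp [hσ, toTransducer_toTable]⟩
  decode_comp :=
    (Primrec.option_map primrec_decodeTable (primrec_stdCode.comp Primrec.snd).to₂).to_comp.of_eq
      fun σ => by simp [Option.map_map, Function.comp_def, stdEnc_toTransducer]

theorem C_S₁_markedUnary {n : ℕ} (hn : 0 < n) : S₁.C (markedUnary n) = n.size + 2 := by
  refine IsLeast.csInf_eq ⟨⟨true :: n.bits, (famTable n).toTransducer, [false], ?_, ?_, ?_⟩, ?_⟩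
  · simp [S₁, decodeTable_bits hn]
  · simp [output_famTable]
  · simp [Nat.size_eq_bits_len]
  · rintro c ⟨σ, T, p, hdec, hout, rfl⟩
    obtain ⟨d, hd, rfl⟩ := Option.map_eq_some_iff.mp hdec
    rcases length_add_length_of_output_eq_markedUnary hd hout with ⟨-, h⟩ | h <;> omega

theorem markedUnary_mem_Lle_S₁_iff {n m : ℕ} (hn : 0 < n) :
    markedUnary n ∈ S₁.Lle m ↔ n ≤ m := by
  constructor
  · rintro ⟨σ, T, p, hdec, hout, hcost, hsize⟩
    obtain ⟨d, hd, rfl⟩ := Option.map_eq_some_iff.mp hdec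
    rw [C_S₁_markedUnary hn] at hcost
    rcases length_add_length_of_output_eq_markedUnary hd hout with ⟨rfl, -⟩ | h
    · rwa [size_famTable hn] at hsize
    · omega
  · intro h
    refine ⟨true :: n.bits, (famTable n).toTransducer, [false], ?_, ?_, ?_, ?_⟩
    · simp [S₁, decodeTable_bits hn]
    · simp [output_famTable]
    · simp [C_S₁_markedUnary hn, Nat.size_eq_bits_len]
    · rwa [size_famTable hn]

theorem stmt11 : ∃ S : CompEncoding, ∀ n : ℕ, 1 ≤ n → S.Lle (n - 1) ⊂ S.Lle n := by
  refine ⟨S₁, fun n hn => (Set.ssubset_iff_of_subset (S₁.Lle_mono (Nat.sub_le n 1))).2 ?_⟩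
  refine ⟨markedUnary n, (markedUnary_mem_Lle_S₁_iff hn).2 le_rfl, fun h => ?_⟩
  have := (markedUnary_mem_Lle_S₁_iff hn).1 h
  omega
end
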